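/- arXiv:math/0205049 — 9 statements merged into one kernel-verified Lean document; each statement's English description precedes it below -/
import Mathlib

section
/- Let X be a finite set, let P be a strict partial order on X, and let {a,b} ∈ Q(P). Then there exists a strict partial order P' on X with P' ≠ P such that P' agrees with P on every ordered pair (x,y) with {x,y} ≠ {a,b} (i.e., for all x,y with {x,y} ≠ {a,b}: (x,y) ∈ P' iff (x,y) ∈ P). In other words, a learner that has not compared the pair {a,b} cannot distinguish P from P', so any algorithm learning P by pairwise comparisons must perform at least |Q(P)| comparisons. -/
/-- A strict partial order on a type, identified with its set of ordered pairs: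
an irreflexive transitive binary relation. -/
def IsSPO {α : Type*} (P : Set (α × α)) : Prop :=
  (∀ x : α, (x, x) ∉ P) ∧ ∀ x y z : α, (x, y) ∈ P → (y, z) ∈ P → (x, z) ∈ P

/-- The covering relation `P^∨ = P \ P²` of `P`. -/
def covRel {α : Type*} (P : Set (α × α)) : Set (α × α) :=
  {p | p ∈ P ∧ ¬ ∃ z : α, (p.1, z) ∈ P ∧ (z, p.2) ∈ P}

/-- The anti-covering relation `P^⤢` of `P`: all pairs `(a,b)` with `a ≠ b`,
`(a,b) ∉ P`, `Pa ⊆ Pb` and `bP ⊆ aP`. -/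
def acovRel {α : Type*} (P : Set (α × α)) : Set (α × α) :=
  {p | p.1 ≠ p.2 ∧ p ∉ P ∧ (∀ z : α, (z, p.1) ∈ P → (z, p.2) ∈ P) ∧
    (∀ z : α, (p.2, z) ∈ P → (p.1, z) ∈ P)}

/-- `Q(P)`: the set of unordered pairs `{a,b}` such that `(a,b)` (or `(b,a)`)
is a covering or an anti-covering pair of `P`. -/
def QP {α : Type*} (P : Set (α × α)) : Set (Sym2 α) :=
  {s | ∃ a b : α, s = s(a, b) ∧ ((a, b) ∈ covRel P ∨ (a, b) ∈ acovRel P)}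

/-- if `{a,b} ∈ Q(P)` then there is a strict partial order `P' ≠ P`
agreeing with `P` on every ordered pair `(x,y)` with `{x,y} ≠ {a,b}`. -/
theorem stmt0 {α : Type*} [Fintype α] (P : Set (α × α)) (hP : IsSPO P)
    (a b : α) (hab : s(a, b) ∈ QP P) :
    ∃ P' : Set (α × α), IsSPO P' ∧ P' ≠ P ∧
      ∀ x y : α, s(x, y) ≠ s(a, b) → ((x, y) ∈ P' ↔ (x, y) ∈ P) := by
  obtain ⟨a', b', hs, hcase⟩ := hab
  obtain ⟨hirr, htr⟩ := hP
  have hkey : ∀ x y : α, s(x, y) ≠ s(a, b) → (x, y) ≠ (a', b') := by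
    intro x y h hxy
    obtain ⟨rfl, rfl⟩ := Prod.mk.injEq .. ▸ hxy
    exact h hs.symm
  rcases hcase with ⟨hmem, hnot⟩ | ⟨hne, hnmem, h1, h2⟩
  · refine ⟨P \ {(a', b')}, ⟨fun x hx => hirr x hx.1, ?_⟩, ?_, ?_⟩
    · rintro x y z ⟨hxy, -⟩ ⟨hyz, -⟩
      refine ⟨htr x y z hxy hyz, ?_⟩
      rintro (h : (x, z) = (a', b'))
      obtain ⟨rfl, rfl⟩ := Prod.mk.injEq .. ▸ h
      exact hnot ⟨y, hxy, hyz⟩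
    · intro h
      rw [← h] at hmem
      exact hmem.2 rfl
    · intro x y h
      exact ⟨fun hx => hx.1, fun hx => ⟨hx, hkey x y h⟩⟩
  · refine ⟨insert (a', b') P, ⟨?_, ?_⟩, ?_, ?_⟩
    · intro x hx
      rcases hx with hx | hx
      · obtain ⟨rfl, rfl⟩ := Prod.mk.injEq .. ▸ hx
        exact hne rfl
      · exact hirr x hx
    · rintro x y z (hxy | hxy) (hyz | hyz)
      · obtain ⟨rfl, rfl⟩ := Prod.mk.injEq .. ▸ hxy
        obtain ⟨rfl, rfl⟩ := Prod.mk.injEq .. ▸ hyz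
        exact absurd rfl hne
      · obtain ⟨rfl, rfl⟩ := Prod.mk.injEq .. ▸ hxy
        exact Or.inr (h2 z hyz)
      · obtain ⟨rfl, rfl⟩ := Prod.mk.injEq .. ▸ hyz
        exact Or.inr (h1 x hxy)
      · exact Or.inr (htr x y z hxy hyz)
    · intro h
      exact hnmem (h ▸ Set.mem_insert _ _)
    · intro x y h
      refine ⟨fun hx => ?_, fun hx => Or.inr hx⟩
      rcases hx with hx | hx
      · exact absurd hx (hkey x y h)
      · exact hx
end

section
/- Let n be divisible by 4, let (A,B,C) ∈ L(n), and let P ∈ T_{ABC}(n). Then P ∩ (A×A ∪ B×B ∪ C×C) = ∅, P ⊆ (A×B) ∪ (B×C) ∪ (A×C), and moreover A×C ⊆ P. Consequently every element of A is a minimal element of P, every element of C is a maximal element of P, and B is an antichain of P. -/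
/-- `Px = {z : z P x}`, the strict down-set of `x`. -/
def dSet {α : Type*} (P : Set (α × α)) (x : α) : Set α := {z | (z, x) ∈ P}

/-- `xP = {z : x P z}`, the strict up-set of `x`. -/
def uSet {α : Type*} (P : Set (α × α)) (x : α) : Set α := {z | (x, z) ∈ P}

/-- `(A,B,C) ∈ L(n)`: an ordered partition of `{0,…,n-1}` with
`|A| = |C| = n/4` and `|B| = n/2`. -/
def LPart (n : ℕ) (A B C : Finset (Fin n)) : Prop :=
  Disjoint A B ∧ Disjoint A C ∧ Disjoint B C ∧ A ∪ B ∪ C = Finset.univ ∧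
    A.card = n / 4 ∧ C.card = n / 4 ∧ B.card = n / 2

/-- `P ∈ T_{ABC}(n)`: a strict partial order such that
(i) for distinct `x,y` in the same level, `Px ⊈ Py` or `yP ⊈ xP`, and
(ii) for all `(a,b,c) ∈ A×B×C`: `aP ∩ B ∩ Pc ≠ ∅`, `A ∩ Pb ≠ ∅` and `bP ∩ C ≠ ∅`. -/
def TABC (n : ℕ) (A B C : Finset (Fin n)) (P : Set (Fin n × Fin n)) : Prop :=
  IsSPO P ∧
    (∀ x y : Fin n,
      ((x ∈ A ∧ y ∈ A) ∨ (x ∈ B ∧ y ∈ B) ∨ (x ∈ C ∧ y ∈ C)) → x ≠ y →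
        ¬ dSet P x ⊆ dSet P y ∨ ¬ uSet P y ⊆ uSet P x) ∧
    (∀ a ∈ A, ∀ b ∈ B, ∀ c ∈ C,
      (uSet P a ∩ ↑B ∩ dSet P c).Nonempty ∧ (↑A ∩ dSet P b).Nonempty ∧
        (uSet P b ∩ ↑C).Nonempty)

/-- members of `T_{ABC}(n)` are three-leveled: no relations inside
a level, all relations go `A→B`, `B→C` or `A→C`, and all of `A×C` is related;
consequently `A`-elements are minimal, `C`-elements are maximal, and `B` is an
antichain. -/
theorem stmt3 (n : ℕ) (hn : 4 ∣ n) (A B C : Finset (Fin n))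
    (hL : LPart n A B C) (P : Set (Fin n × Fin n)) (hT : TABC n A B C P) :
    P ∩ ((↑A ×ˢ ↑A) ∪ (↑B ×ˢ ↑B) ∪ (↑C ×ˢ ↑C)) = ∅ ∧
    P ⊆ (↑A ×ˢ ↑B) ∪ (↑B ×ˢ ↑C) ∪ (↑A ×ˢ ↑C) ∧
    (↑A ×ˢ ↑C : Set (Fin n × Fin n)) ⊆ P ∧
    (∀ a ∈ A, ∀ x : Fin n, (x, a) ∉ P) ∧
    (∀ c ∈ C, ∀ x : Fin n, (c, x) ∉ P) ∧
    (∀ b ∈ B, ∀ b' ∈ B, (b, b') ∉ P) := by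
  obtain ⟨⟨hirr, htrans⟩, hi, hii⟩ := hT
  obtain ⟨hAB, hAC, hBC, hcover, hAcard, hCcard, hBcard⟩ := hL
  obtain ⟨k, rfl⟩ := hn
  have hAne : ∀ _ : Fin (4 * k), A.Nonempty := by
    intro x; rw [← Finset.card_pos, hAcard]; have := x.pos; omega
  have hBne : ∀ _ : Fin (4 * k), B.Nonempty := by
    intro x; rw [← Finset.card_pos, hBcard]; have := x.pos; omega
  have hCne : ∀ _ : Fin (4 * k), C.Nonempty := by
    intro x; rw [← Finset.card_pos, hCcard]; have := x.pos; omega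
  have hintra : ∀ x y : Fin (4 * k),
      ((x ∈ A ∧ y ∈ A) ∨ (x ∈ B ∧ y ∈ B) ∨ (x ∈ C ∧ y ∈ C)) → (x, y) ∉ P := by
    intro x y h hxy
    have hne : x ≠ y := by rintro rfl; exact hirr x hxy
    rcases hi x y h hne with h1 | h2
    · exact h1 fun z hz => htrans z x y hz hxy
    · exact h2 fun z hz => htrans x y z hxy hz
  have hACP : ∀ a ∈ A, ∀ c ∈ C, (a, c) ∈ P := by
    intro a ha c hc
    obtain ⟨b, hb⟩ := hBne a
    obtain ⟨⟨b', hb'⟩, -, -⟩ := hii a ha b hb c hc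
    exact htrans a b' c hb'.1.1 hb'.2
  have hnBA : ∀ b ∈ B, ∀ a ∈ A, (b, a) ∉ P := by
    intro b hb a ha hba
    obtain ⟨c, hc⟩ := hCne b
    obtain ⟨-, ⟨a', ha'⟩, -⟩ := hii a ha b hb c hc
    exact hintra a' a (Or.inl ⟨ha'.1, ha⟩) (htrans a' b a ha'.2 hba)
  have hnCB : ∀ c ∈ C, ∀ b ∈ B, (c, b) ∉ P := by
    intro c hc b hb hcb
    obtain ⟨a, ha⟩ := hAne c
    obtain ⟨-, -, ⟨c', hc'⟩⟩ := hii a ha b hb c hc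
    exact hintra c c' (Or.inr (Or.inr ⟨hc, hc'.2⟩)) (htrans c b c' hcb hc'.1)
  have hnCA : ∀ c ∈ C, ∀ a ∈ A, (c, a) ∉ P := by
    intro c hc a ha hca
    exact hirr a (htrans a c a (hACP a ha c hc) hca)
  have hmem : ∀ x : Fin (4 * k), x ∈ A ∨ x ∈ B ∨ x ∈ C := by
    intro x
    have : x ∈ A ∪ B ∪ C := hcover ▸ Finset.mem_univ x
    simpa [Finset.mem_union, or_assoc] using this
  refine ⟨?_, ?_, ?_, ?_, ?_, ?_⟩
  · ext ⟨x, y⟩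
    simp only [Set.mem_inter_iff, Set.mem_union, Set.mem_prod, Set.mem_empty_iff_false,
      iff_false, Finset.mem_coe]
    rintro ⟨hxy, (h | h) | h⟩
    · exact hintra x y (Or.inl h) hxy
    · exact hintra x y (Or.inr (Or.inl h)) hxy
    · exact hintra x y (Or.inr (Or.inr h)) hxy
  · rintro ⟨x, y⟩ hxy
    simp only [Set.mem_union, Set.mem_prod, Finset.mem_coe]
    rcases hmem x with hx | hx | hx <;> rcases hmem y with hy | hy | hy
    · exact absurd hxy (hintra x y (Or.inl ⟨hx, hy⟩))
    · exact Or.inl (Or.inl ⟨hx, hy⟩)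
    · exact Or.inr ⟨hx, hy⟩
    · exact absurd hxy (hnBA x hx y hy)
    · exact absurd hxy (hintra x y (Or.inr (Or.inl ⟨hx, hy⟩)))
    · exact Or.inl (Or.inr ⟨hx, hy⟩)
    · exact absurd hxy (hnCA x hx y hy)
    · exact absurd hxy (hnCB x hx y hy)
    · exact absurd hxy (hintra x y (Or.inr (Or.inr ⟨hx, hy⟩)))
  · rintro ⟨a, c⟩ ⟨ha, hc⟩
    exact hACP a ha c hc
  · intro a ha x hx
    rcases hmem x with h | h | h
    · exact hintra x a (Or.inl ⟨h, ha⟩) hx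
    · exact hnBA x h a ha hx
    · exact hnCA x h a ha hx
  · intro c hc x hx
    rcases hmem x with h | h | h
    · exact hirr c (htrans c x c hx (hACP x h c hc))
    · exact hnCB c hc x h hx
    · exact hintra c x (Or.inr (Or.inr ⟨hc, h⟩)) hx
  · intro b hb b' hb'
    exact hintra b b' (Or.inr (Or.inl ⟨hb, hb'⟩))
end

section
/- Let n be divisible by 4, let (A,B,C) ∈ L(n), and let P ∈ T_{ABC}(n). Then the covering relation of P is exactly P^∨ = P ∩ ((A×B) ∪ (B×C)); in particular P^∨ ⊆ Q_{ABC}, and no element of C covers an element of A. -/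
/-- for `P ∈ T_{ABC}(n)` the covering relation is exactly
`P ∩ ((A×B) ∪ (B×C))`; in particular `P^∨ ⊆ Q_{ABC} = (A×B) ∪ (B×C)`, and no
element of `C` covers an element of `A`. -/
theorem stmt4 (n : ℕ) (hn : 4 ∣ n) (A B C : Finset (Fin n))
    (hL : LPart n A B C) (P : Set (Fin n × Fin n)) (hT : TABC n A B C P) :
    covRel P = P ∩ ((↑A ×ˢ ↑B) ∪ (↑B ×ˢ ↑C)) ∧
    covRel P ⊆ (↑A ×ˢ ↑B) ∪ (↑B ×ˢ ↑C) ∧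
    (∀ a ∈ A, ∀ c ∈ C, (a, c) ∉ covRel P) := by
  obtain ⟨⟨hirr, htrans⟩, hi, hii⟩ := hT
  obtain ⟨hAB, hAC, hBC, huniv, hcA, hcC, hcB⟩ := hL
  have hn4 : ∀ _ : Fin n, 4 ≤ n := fun x => Nat.le_of_dvd x.pos hn
  have hAne : ∀ _ : Fin n, A.Nonempty := fun x => by
    rw [← Finset.card_pos, hcA]; exact Nat.div_pos (hn4 x) (by norm_num)
  have hBne : ∀ _ : Fin n, B.Nonempty := fun x => by
    rw [← Finset.card_pos, hcB]; exact Nat.div_pos (by linarith [hn4 x]) (by norm_num)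
  have hCne : ∀ _ : Fin n, C.Nonempty := fun x => by
    rw [← Finset.card_pos, hcC]; exact Nat.div_pos (hn4 x) (by norm_num)
  have hmem : ∀ x : Fin n, x ∈ A ∨ x ∈ B ∨ x ∈ C := fun x => by
    have hx := Finset.mem_univ x
    rw [← huniv] at hx
    simpa [Finset.mem_union, or_assoc] using hx
  -- no pairs within a level
  have hlev : ∀ x y : Fin n,
      ((x ∈ A ∧ y ∈ A) ∨ (x ∈ B ∧ y ∈ B) ∨ (x ∈ C ∧ y ∈ C)) → (x, y) ∉ P := by
    intro x y h hxy
    have hne : x ≠ y := fun e => hirr x (by rw [e] at hxy ⊢; exact hxy)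
    rcases hi x y h hne with h' | h'
    · exact h' (fun z hz => htrans z x y hz hxy)
    · exact h' (fun z hz => htrans x y z hxy hz)
  -- no pair from B to A
  have hnBA : ∀ x ∈ B, ∀ y ∈ A, (x, y) ∉ P := by
    intro x hx y hy hxy
    obtain ⟨c0, hc0⟩ := hCne x
    obtain ⟨a', ha'⟩ := (hii y hy x hx c0 hc0).2.1
    have ha'A : a' ∈ A := ha'.1
    have ha'x : (a', x) ∈ P := ha'.2
    exact hlev a' y (Or.inl ⟨ha'A, hy⟩) (htrans a' x y ha'x hxy)
  -- no pair from C to B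
  have hnCB : ∀ x ∈ C, ∀ y ∈ B, (x, y) ∉ P := by
    intro x hx y hy hxy
    obtain ⟨a0, ha0⟩ := hAne x
    obtain ⟨c', hc'⟩ := (hii a0 ha0 y hy x hx).2.2
    have hyc' : (y, c') ∈ P := hc'.1
    exact hlev x c' (Or.inr (Or.inr ⟨hx, hc'.2⟩)) (htrans x y c' hxy hyc')
  -- structure of P
  have hP : ∀ p ∈ P, (p.1 ∈ A ∧ p.2 ∈ B) ∨ (p.1 ∈ B ∧ p.2 ∈ C) ∨
      (p.1 ∈ A ∧ p.2 ∈ C) := by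
    rintro ⟨x, y⟩ hxy
    rcases hmem x with hx | hx | hx <;> rcases hmem y with hy | hy | hy
    · exact absurd hxy (hlev x y (Or.inl ⟨hx, hy⟩))
    · exact Or.inl ⟨hx, hy⟩
    · exact Or.inr (Or.inr ⟨hx, hy⟩)
    · exact absurd hxy (hnBA x hx y hy)
    · exact absurd hxy (hlev x y (Or.inr (Or.inl ⟨hx, hy⟩)))
    · exact Or.inr (Or.inl ⟨hx, hy⟩)
    · -- x ∈ C, y ∈ A : y has something above in B
      obtain ⟨b0, hb0⟩ := hBne x
      obtain ⟨c0, hc0⟩ := hCne x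
      obtain ⟨b', hb'⟩ := (hii y hy b0 hb0 c0 hc0).1
      have hyb' : (y, b') ∈ P := hb'.1.1
      exact absurd (htrans x y b' hxy hyb') (hnCB x hx b' hb'.1.2)
    · exact absurd hxy (hnCB x hx y hy)
    · exact absurd hxy (hlev x y (Or.inr (Or.inr ⟨hx, hy⟩)))
  -- A×C pairs have a middle element
  have hmid : ∀ x ∈ A, ∀ y ∈ C, ∃ z, (x, z) ∈ P ∧ (z, y) ∈ P := by
    intro x hx y hy
    obtain ⟨b0, hb0⟩ := hBne x
    obtain ⟨z, hz⟩ := (hii x hx b0 hb0 y hy).1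
    exact ⟨z, hz.1.1, hz.2⟩
  have heq : covRel P = P ∩ ((↑A ×ˢ ↑B) ∪ (↑B ×ˢ ↑C)) := by
    ext ⟨x, y⟩
    constructor
    · rintro ⟨hxy, hnc⟩
      refine ⟨hxy, ?_⟩
      rcases hP (x, y) hxy with h | h | h
      · exact Or.inl ⟨h.1, h.2⟩
      · exact Or.inr ⟨h.1, h.2⟩
      · exact absurd (hmid x h.1 y h.2) hnc
    · rintro ⟨hxy, hq⟩
      refine ⟨hxy, ?_⟩
      rintro ⟨z, h1, h2⟩
      rcases hq with ⟨hxA, hyB⟩ | ⟨hxB, hyC⟩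
      · have hxA' : x ∈ A := hxA
        have hyB' : y ∈ B := hyB
        -- (z,y) ∈ P with y ∈ B forces z ∈ A; (x,z) ∈ P with x ∈ A forces z ∈ B ∪ C
        rcases hP (z, y) h2 with h | h | h
        · rcases hP (x, z) h1 with h' | h' | h'
          · exact absurd h'.2 (Finset.disjoint_left.mp hAB h.1)
          · exact absurd h'.1 (Finset.disjoint_left.mp hAB hxA')
          · exact absurd h'.2 (Finset.disjoint_left.mp hAC h.1)
        · exact absurd h.2 (Finset.disjoint_left.mp hBC hyB')
        · exact absurd h.2 (Finset.disjoint_left.mp hBC hyB')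
      · have hxB' : x ∈ B := hxB
        rcases hP (x, z) h1 with h | h | h
        · exact absurd h.1 (Finset.disjoint_left.mp hAB · hxB')
        · rcases hP (z, y) h2 with h' | h' | h'
          · exact absurd h'.1 (Finset.disjoint_left.mp hAC · h.2)
          · exact absurd h'.1 (Finset.disjoint_left.mp hBC · h.2)
          · exact absurd h'.1 (Finset.disjoint_left.mp hAC · h.2)
        · exact absurd h.1 (Finset.disjoint_left.mp hAB · hxB')
  refine ⟨heq, ?_, ?_⟩
  · intro p hp
    rw [heq] at hp
    exact hp.2
  · intro a ha c hc hac
    rw [heq] at hac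
    rcases hac.2 with ⟨h1, h2⟩ | ⟨h1, h2⟩
    · exact Finset.disjoint_left.mp hBC h2 hc
    · exact Finset.disjoint_left.mp hAB ha h1
end

section
/- Let n be divisible by 4, let (A,B,C) ∈ L(n), and let P ∈ T_{ABC}(n). Then Q(P) = { {a,b} : (a,b) ∈ (A×B) ∪ (B×C) }, i.e., the set of unordered pairs that are coverings or anti-coverings of P is exactly the set of unordered pairs coming from Q_{ABC}. -/
/-- for `P ∈ T_{ABC}(n)`, `Q(P)` is exactly the set of unordered
pairs coming from `Q_{ABC} = (A×B) ∪ (B×C)`. -/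
theorem stmt5 (n : ℕ) (hn : 4 ∣ n) (A B C : Finset (Fin n))
    (hL : LPart n A B C) (P : Set (Fin n × Fin n)) (hT : TABC n A B C P) :
    QP P = {s : Sym2 (Fin n) | ∃ a b : Fin n, s = s(a, b) ∧
      (a, b) ∈ ((↑A ×ˢ ↑B) ∪ (↑B ×ˢ ↑C) : Set (Fin n × Fin n))} := by
  obtain ⟨hAB, hAC', hBC, huniv, hcA, hcC, hcB⟩ := hL
  obtain ⟨⟨hirr, htrans⟩, hi, hii⟩ := hT
  rcases Nat.eq_zero_or_pos n with hn0 | hpos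
  · subst hn0
    ext s
    induction s using Sym2.inductionOn with
    | hf a b => exact a.elim0
  have hn4 : 4 ≤ n := Nat.le_of_dvd hpos hn
  have hAne : A.Nonempty := Finset.card_pos.mp (by rw [hcA]; exact Nat.div_pos hn4 (by norm_num))
  have hBne : B.Nonempty := Finset.card_pos.mp (by rw [hcB]; exact Nat.div_pos (by omega) (by norm_num))
  have hCne : C.Nonempty := Finset.card_pos.mp (by rw [hcC]; exact Nat.div_pos hn4 (by norm_num))
  obtain ⟨a0, ha0⟩ := hAne
  obtain ⟨b0, hb0⟩ := hBne
  obtain ⟨c0, hc0⟩ := hCne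
  have hmem : ∀ x : Fin n, x ∈ A ∨ x ∈ B ∨ x ∈ C := by
    intro x
    have hx : x ∈ A ∪ B ∪ C := by rw [huniv]; exact Finset.mem_univ x
    simp only [Finset.mem_union] at hx
    tauto
  have hmid : ∀ a ∈ A, ∀ c ∈ C, ∃ b' ∈ B, (a, b') ∈ P ∧ (b', c) ∈ P := by
    intro a ha c hc
    obtain ⟨z, hz⟩ := (hii a ha b0 hb0 c hc).1
    exact ⟨z, hz.1.2, hz.1.1, hz.2⟩
  have hACin : ∀ a ∈ A, ∀ c ∈ C, (a, c) ∈ P := by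
    intro a ha c hc
    obtain ⟨b', _, h1, h2⟩ := hmid a ha c hc
    exact htrans a b' c h1 h2
  have hbelow : ∀ b ∈ B, ∃ a ∈ A, (a, b) ∈ P := by
    intro b hb
    obtain ⟨z, hz⟩ := (hii a0 ha0 b hb c0 hc0).2.1
    exact ⟨z, hz.1, hz.2⟩
  have habove : ∀ b ∈ B, ∃ c ∈ C, (b, c) ∈ P := by
    intro b hb
    obtain ⟨z, hz⟩ := (hii a0 ha0 b hb c0 hc0).2.2
    exact ⟨z, hz.2, hz.1⟩
  have hsame : ∀ x y : Fin n,
      ((x ∈ A ∧ y ∈ A) ∨ (x ∈ B ∧ y ∈ B) ∨ (x ∈ C ∧ y ∈ C)) → (x, y) ∈ P → False := by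
    intro x y h hxy
    by_cases hxy' : x = y
    · subst hxy'; exact hirr x hxy
    · rcases hi x y h hxy' with h1 | h1
      · exact h1 (fun z hz => htrans z x y hz hxy)
      · exact h1 (fun z hz => htrans x y z hxy hz)
  have hclass : ∀ x y : Fin n, (x, y) ∈ P →
      (x ∈ A ∧ y ∈ B) ∨ (x ∈ B ∧ y ∈ C) ∨ (x ∈ A ∧ y ∈ C) := by
    intro x y hxy
    rcases hmem x with hx | hx | hx <;> rcases hmem y with hy | hy | hy
    · exact (hsame x y (Or.inl ⟨hx, hy⟩) hxy).elim
    · exact Or.inl ⟨hx, hy⟩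
    · exact Or.inr (Or.inr ⟨hx, hy⟩)
    · obtain ⟨a', ha', hab⟩ := hbelow x hx
      exact (hsame a' y (Or.inl ⟨ha', hy⟩) (htrans a' x y hab hxy)).elim
    · exact (hsame x y (Or.inr (Or.inl ⟨hx, hy⟩)) hxy).elim
    · exact Or.inr (Or.inl ⟨hx, hy⟩)
    · exact (hirr x (htrans x y x hxy (hACin y hy x hx))).elim
    · obtain ⟨c', hc', hbc⟩ := habove y hy
      exact (hsame x c' (Or.inr (Or.inr ⟨hx, hc'⟩)) (htrans x y c' hxy hbc)).elim
    · exact (hsame x y (Or.inr (Or.inr ⟨hx, hy⟩)) hxy).elim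
  have hcovAB : ∀ a ∈ A, ∀ b ∈ B, (a, b) ∈ P → (a, b) ∈ covRel P := by
    intro a ha b hb hab
    refine ⟨hab, ?_⟩
    rintro ⟨z, h1, h2⟩
    rcases hclass z b h2 with ⟨hz, _⟩ | ⟨_, hb'⟩ | ⟨_, hb'⟩
    · exact hsame a z (Or.inl ⟨ha, hz⟩) h1
    · exact Finset.disjoint_left.mp hBC hb hb'
    · exact Finset.disjoint_left.mp hBC hb hb'
  have hcovBC : ∀ b ∈ B, ∀ c ∈ C, (b, c) ∈ P → (b, c) ∈ covRel P := by
    intro b hb c hc hbc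
    refine ⟨hbc, ?_⟩
    rintro ⟨z, h1, h2⟩
    rcases hclass b z h1 with ⟨hb', _⟩ | ⟨_, hz⟩ | ⟨hb', _⟩
    · exact Finset.disjoint_left.mp hAB hb' hb
    · exact hsame z c (Or.inr (Or.inr ⟨hz, hc⟩)) h2
    · exact Finset.disjoint_left.mp hAB hb' hb
  ext s
  simp only [QP, Set.mem_setOf_eq, Set.mem_union, Set.mem_prod, Finset.mem_coe]
  constructor
  · rintro ⟨a, b, rfl, hab | hab⟩
    · obtain ⟨hP, hnomid⟩ := hab
      rcases hclass a b hP with h | h | h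
      · exact ⟨a, b, rfl, Or.inl h⟩
      · exact ⟨a, b, rfl, Or.inr h⟩
      · obtain ⟨b', _, h1, h2⟩ := hmid a h.1 b h.2
        exact (hnomid ⟨b', h1, h2⟩).elim
    · obtain ⟨hne, hnP, hd, hu⟩ := hab
      rcases hmem a with ha | ha | ha <;> rcases hmem b with hb | hb | hb
      · rcases hi a b (Or.inl ⟨ha, hb⟩) hne with h | h
        · exact (h (fun z hz => hd z hz)).elim
        · exact (h (fun z hz => hu z hz)).elim
      · exact ⟨a, b, rfl, Or.inl ⟨ha, hb⟩⟩
      · exact (hnP (hACin a ha b hb)).elim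
      · obtain ⟨a', ha', h'⟩ := hbelow a ha
        exact (hsame a' b (Or.inl ⟨ha', hb⟩) (hd a' h')).elim
      · rcases hi a b (Or.inr (Or.inl ⟨ha, hb⟩)) hne with h | h
        · exact (h (fun z hz => hd z hz)).elim
        · exact (h (fun z hz => hu z hz)).elim
      · exact ⟨a, b, rfl, Or.inr ⟨ha, hb⟩⟩
      · exact (hsame a0 b (Or.inl ⟨ha0, hb⟩) (hd a0 (hACin a0 ha0 a ha))).elim
      · obtain ⟨c', hc', h'⟩ := habove b hb
        exact (hsame a c' (Or.inr (Or.inr ⟨ha, hc'⟩)) (hu c' h')).elim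
      · rcases hi a b (Or.inr (Or.inr ⟨ha, hb⟩)) hne with h | h
        · exact (h (fun z hz => hd z hz)).elim
        · exact (h (fun z hz => hu z hz)).elim
  · rintro ⟨a, b, rfl, ⟨ha, hb⟩ | ⟨ha, hb⟩⟩
    · refine ⟨a, b, rfl, ?_⟩
      by_cases hP : (a, b) ∈ P
      · exact Or.inl (hcovAB a ha b hb hP)
      · refine Or.inr ⟨?_, hP, ?_, ?_⟩
        · intro h
          exact Finset.disjoint_left.mp hAB ha
            (show a ∈ B by rw [show a = b from h]; exact hb)
        · intro z hz
          rcases hclass z a hz with ⟨_, ha'⟩ | ⟨_, ha'⟩ | ⟨_, ha'⟩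
          · exact (Finset.disjoint_left.mp hAB ha ha').elim
          · exact (Finset.disjoint_left.mp hAC' ha ha').elim
          · exact (Finset.disjoint_left.mp hAC' ha ha').elim
        · intro z hz
          rcases hclass b z hz with ⟨hb', _⟩ | ⟨_, hz'⟩ | ⟨hb', _⟩
          · exact (Finset.disjoint_left.mp hAB hb' hb).elim
          · exact hACin a ha z hz'
          · exact (Finset.disjoint_left.mp hAB hb' hb).elim
    · refine ⟨a, b, rfl, ?_⟩
      by_cases hP : (a, b) ∈ P
      · exact Or.inl (hcovBC a ha b hb hP)
      · refine Or.inr ⟨?_, hP, ?_, ?_⟩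
        · intro h
          exact Finset.disjoint_left.mp hBC ha
            (show a ∈ C by rw [show a = b from h]; exact hb)
        · intro z hz
          rcases hclass z a hz with ⟨hz', _⟩ | ⟨_, ha'⟩ | ⟨hz', _⟩
          · exact hACin z hz' b hb
          · exact (Finset.disjoint_left.mp hBC ha ha').elim
          · exact hACin z hz' b hb
        · intro z hz
          rcases hclass b z hz with ⟨hb', _⟩ | ⟨hb', _⟩ | ⟨hb', _⟩
          · exact (Finset.disjoint_left.mp hAC' hb' hb).elim
          · exact (Finset.disjoint_left.mp hBC hb' hb).elim
          · exact (Finset.disjoint_left.mp hAC' hb' hb).elim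
end

section
/- Let n be divisible by 4 and let P ∈ T(n). Then |Q(P)| = n²/4. -/
/-- for `P ∈ T(n) = ∪_{(A,B,C) ∈ L(n)} T_{ABC}(n)`,
`|Q(P)| = n²/4`. -/
theorem stmt6 (n : ℕ) (hn : 4 ∣ n) (P : Set (Fin n × Fin n))
    (hT : ∃ A B C : Finset (Fin n), LPart n A B C ∧ TABC n A B C P) :
    (QP P).ncard = n ^ 2 / 4 := by
  obtain ⟨m, rfl⟩ := hn
  obtain ⟨A, B, C, ⟨hAB, hAC, hBC, hU, hcA, hcC, hcB⟩, ⟨hirr, htr⟩, hi, hii⟩ := hT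
  rcases Nat.eq_zero_or_pos m with rfl | hm
  · have hQ : QP P = ∅ := by
      ext s
      simp only [QP, Set.mem_setOf_eq, Set.mem_empty_iff_false, iff_false]
      rintro ⟨a, b, -⟩
      have := a.isLt
      omega
    simp [hQ]
  · have hmA : A.card = m := by omega
    have hmC : C.card = m := by omega
    have hmB : B.card = 2 * m := by omega
    obtain ⟨a0, ha0⟩ := Finset.card_pos.mp (by omega : 0 < A.card)
    obtain ⟨b0, hb0⟩ := Finset.card_pos.mp (by omega : 0 < B.card)
    obtain ⟨c0, hc0⟩ := Finset.card_pos.mp (by omega : 0 < C.card)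
    have hlev : ∀ x : Fin (4 * m), x ∈ A ∨ x ∈ B ∨ x ∈ C := by
      intro x
      have hx : x ∈ A ∪ B ∪ C := hU ▸ Finset.mem_univ x
      simpa [Finset.mem_union, or_assoc] using hx
    have hsame : ∀ x y : Fin (4 * m),
        ((x ∈ A ∧ y ∈ A) ∨ (x ∈ B ∧ y ∈ B) ∨ (x ∈ C ∧ y ∈ C)) → (x, y) ∉ P := by
      intro x y hxy hP
      rcases eq_or_ne x y with rfl | hne
      · exact hirr x hP
      · rcases hi x y hxy hne with h | h
        · exact h (fun z hz => htr z x y hz hP)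
        · exact h (fun z hz => htr x y z hP hz)
    have hmid : ∀ a ∈ A, ∀ c ∈ C, ∃ z ∈ B, (a, z) ∈ P ∧ (z, c) ∈ P := by
      intro a ha c hc
      obtain ⟨z, hz⟩ := (hii a ha b0 hb0 c hc).1
      exact ⟨z, hz.1.2, hz.1.1, hz.2⟩
    have hup : ∀ b ∈ B, ∃ c ∈ C, (b, c) ∈ P := by
      intro b hb
      obtain ⟨z, hz⟩ := (hii a0 ha0 b hb c0 hc0).2.2
      exact ⟨z, hz.2, hz.1⟩
    have hAC' : ∀ a ∈ A, ∀ c ∈ C, (a, c) ∈ P := by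
      intro a ha c hc
      obtain ⟨z, _, h1, h2⟩ := hmid a ha c hc
      exact htr a z c h1 h2
    have hCB : ∀ c ∈ C, ∀ b ∈ B, (c, b) ∉ P := by
      intro c hc b hb h
      obtain ⟨c', hc', h'⟩ := hup b hb
      exact hsame c c' (Or.inr (Or.inr ⟨hc, hc'⟩)) (htr _ _ _ h h')
    have hBA : ∀ b ∈ B, ∀ a ∈ A, (b, a) ∉ P := by
      intro b hb a ha h
      obtain ⟨z, hz, hz1, -⟩ := hmid a ha c0 hc0
      exact hsame b z (Or.inr (Or.inl ⟨hb, hz⟩)) (htr _ _ _ h hz1)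
    have hCA : ∀ c ∈ C, ∀ a ∈ A, (c, a) ∉ P := by
      intro c hc a ha h
      obtain ⟨z, hz, hz1, -⟩ := hmid a ha c0 hc0
      exact hCB c hc z hz (htr _ _ _ h hz1)
    have hdA : ∀ a ∈ A, ∀ z, (z, a) ∉ P := by
      intro a ha z h
      rcases hlev z with hz | hz | hz
      · exact hsame z a (Or.inl ⟨hz, ha⟩) h
      · exact hBA z hz a ha h
      · exact hCA z hz a ha h
    have huC : ∀ c ∈ C, ∀ z, (c, z) ∉ P := by
      intro c hc z h
      rcases hlev z with hz | hz | hz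
      · exact hCA c hc z hz h
      · exact hCB c hc z hz h
      · exact hsame c z (Or.inr (Or.inr ⟨hc, hz⟩)) h
    -- pairs between A and B are in QP
    have hQab : ∀ a ∈ A, ∀ b ∈ B, ((a, b) ∈ covRel P ∨ (a, b) ∈ acovRel P) := by
      intro a ha b hb
      by_cases hP : (a, b) ∈ P
      · left
        refine ⟨hP, ?_⟩
        rintro ⟨z, h1, h2⟩
        rcases hlev z with hz | hz | hz
        · exact hsame a z (Or.inl ⟨ha, hz⟩) h1
        · exact hsame z b (Or.inr (Or.inl ⟨hz, hb⟩)) h2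
        · exact hCB z hz b hb h2
      · right
        refine ⟨?_, hP, ?_, ?_⟩
        · exact fun h => Finset.disjoint_left.mp hAB ha ((show a = b from h) ▸ hb)
        · intro z hz
          exact absurd hz (hdA a ha z)
        · intro z hz
          rcases hlev z with h | h | h
          · exact absurd hz (hBA b hb z h)
          · exact absurd hz (hsame b z (Or.inr (Or.inl ⟨hb, h⟩)))
          · exact hAC' a ha z h
    have hQbc : ∀ b ∈ B, ∀ c ∈ C, ((b, c) ∈ covRel P ∨ (b, c) ∈ acovRel P) := by
      intro b hb c hc
      by_cases hP : (b, c) ∈ P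
      · left
        refine ⟨hP, ?_⟩
        rintro ⟨z, h1, h2⟩
        rcases hlev z with hz | hz | hz
        · exact hBA b hb z hz h1
        · exact hsame b z (Or.inr (Or.inl ⟨hb, hz⟩)) h1
        · exact hsame z c (Or.inr (Or.inr ⟨hz, hc⟩)) h2
      · right
        refine ⟨?_, hP, ?_, ?_⟩
        · exact fun h => Finset.disjoint_left.mp hBC hb ((show b = c from h) ▸ hc)
        · intro z hz
          rcases hlev z with h | h | h
          · exact hAC' z h c hc
          · exact absurd hz (hsame z b (Or.inr (Or.inl ⟨h, hb⟩)))
          · exact absurd hz (hCB z h b hb)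
        · intro z hz
          exact absurd hz (huC c hc z)
    -- no same-level pair, no A-C pair, is in cov ∪ acov
    have hnsame : ∀ x y : Fin (4 * m),
        ((x ∈ A ∧ y ∈ A) ∨ (x ∈ B ∧ y ∈ B) ∨ (x ∈ C ∧ y ∈ C)) →
        ¬ ((x, y) ∈ covRel P ∨ (x, y) ∈ acovRel P) := by
      intro x y hxy h
      rcases h with h | h
      · exact hsame x y hxy h.1
      · rcases hi x y hxy h.1 with h' | h'
        · exact h' (fun z hz => h.2.2.1 z hz)
        · exact h' (fun z hz => h.2.2.2 z hz)
    have hnAC : ∀ a ∈ A, ∀ c ∈ C, ¬ ((a, c) ∈ covRel P ∨ (a, c) ∈ acovRel P) := by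
      intro a ha c hc h
      rcases h with h | h
      · obtain ⟨z, -, h1, h2⟩ := hmid a ha c hc
        exact h.2 ⟨z, h1, h2⟩
      · exact h.2.1 (hAC' a ha c hc)
    have hnCA : ∀ c ∈ C, ∀ a ∈ A, ¬ ((c, a) ∈ covRel P ∨ (c, a) ∈ acovRel P) := by
      intro c hc a ha h
      rcases h with h | h
      · exact hCA c hc a ha h.1
      · obtain ⟨z, -, h1, h2⟩ := hmid a ha c hc
        exact hdA a ha z (h.2.2.1 z h2)
    set F : Finset (Sym2 (Fin (4 * m))) :=
      ((A ×ˢ B).image fun p => s(p.1, p.2)) ∪ ((B ×ˢ C).image fun p => s(p.1, p.2)) with hF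
    have hQF : QP P = ↑F := by
      ext s
      constructor
      · rintro ⟨a, b, rfl, h⟩
        have memF1 : ∀ x ∈ A, ∀ y ∈ B, s(x, y) ∈ F := by
          intro x hx y hy
          exact Finset.mem_union_left _ (Finset.mem_image.mpr
            ⟨(x, y), Finset.mem_product.mpr ⟨hx, hy⟩, rfl⟩)
        have memF2 : ∀ x ∈ B, ∀ y ∈ C, s(x, y) ∈ F := by
          intro x hx y hy
          exact Finset.mem_union_right _ (Finset.mem_image.mpr
            ⟨(x, y), Finset.mem_product.mpr ⟨hx, hy⟩, rfl⟩)
        rcases hlev a with ha | ha | ha <;> rcases hlev b with hb | hb | hb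
        · exact absurd h (hnsame a b (Or.inl ⟨ha, hb⟩))
        · exact Finset.mem_coe.mpr (memF1 a ha b hb)
        · exact absurd h (hnAC a ha b hb)
        · exact Finset.mem_coe.mpr ((Sym2.eq_swap : s(b, a) = s(a, b)) ▸ memF1 b hb a ha)
        · exact absurd h (hnsame a b (Or.inr (Or.inl ⟨ha, hb⟩)))
        · exact Finset.mem_coe.mpr (memF2 a ha b hb)
        · exact absurd h (hnCA a ha b hb)
        · exact Finset.mem_coe.mpr ((Sym2.eq_swap : s(b, a) = s(a, b)) ▸ memF2 b hb a ha)
        · exact absurd h (hnsame a b (Or.inr (Or.inr ⟨ha, hb⟩)))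
      · intro hs
        rcases Finset.mem_union.mp (Finset.mem_coe.mp hs) with h | h
        · obtain ⟨p, hp, rfl⟩ := Finset.mem_image.mp h
          obtain ⟨hp1, hp2⟩ := Finset.mem_product.mp hp
          exact ⟨p.1, p.2, rfl, hQab p.1 hp1 p.2 hp2⟩
        · obtain ⟨p, hp, rfl⟩ := Finset.mem_image.mp h
          obtain ⟨hp1, hp2⟩ := Finset.mem_product.mp hp
          exact ⟨p.1, p.2, rfl, hQbc p.1 hp1 p.2 hp2⟩
    rw [hQF, Set.ncard_coe_finset]
    have hdisjF : Disjoint ((A ×ˢ B).image fun p => s(p.1, p.2))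
        ((B ×ˢ C).image fun p => s(p.1, p.2)) := by
      rw [Finset.disjoint_left]
      intro s h1 h2
      obtain ⟨p, hp, rfl⟩ := Finset.mem_image.mp h1
      obtain ⟨hp1, hp2⟩ := Finset.mem_product.mp hp
      obtain ⟨q, hq, hqe⟩ := Finset.mem_image.mp h2
      obtain ⟨hq1, hq2⟩ := Finset.mem_product.mp hq
      rcases Sym2.eq_iff.mp hqe with ⟨e1, e2⟩ | ⟨e1, e2⟩
      · exact Finset.disjoint_left.mp hAB hp1 (e1 ▸ hq1)
      · exact Finset.disjoint_left.mp hAC hp1 (e2 ▸ hq2)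
    have hinj1 : Set.InjOn (fun p : Fin (4 * m) × Fin (4 * m) => s(p.1, p.2)) ↑(A ×ˢ B) := by
      intro p hp q hq he
      obtain ⟨hp1, hp2⟩ := Finset.mem_product.mp (Finset.mem_coe.mp hp)
      obtain ⟨hq1, hq2⟩ := Finset.mem_product.mp (Finset.mem_coe.mp hq)
      rcases Sym2.eq_iff.mp he with ⟨e1, e2⟩ | ⟨e1, e2⟩
      · exact Prod.ext e1 e2
      · exact absurd (e1 ▸ hp1) (Finset.disjoint_right.mp hAB hq2)
    have hinj2 : Set.InjOn (fun p : Fin (4 * m) × Fin (4 * m) => s(p.1, p.2)) ↑(B ×ˢ C) := by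
      intro p hp q hq he
      obtain ⟨hp1, hp2⟩ := Finset.mem_product.mp (Finset.mem_coe.mp hp)
      obtain ⟨hq1, hq2⟩ := Finset.mem_product.mp (Finset.mem_coe.mp hq)
      rcases Sym2.eq_iff.mp he with ⟨e1, e2⟩ | ⟨e1, e2⟩
      · exact Prod.ext e1 e2
      · exact absurd (e1 ▸ hp1) (Finset.disjoint_right.mp hBC hq2)
    rw [hF, Finset.card_union_of_disjoint hdisjF,
      Finset.card_image_of_injOn hinj1, Finset.card_image_of_injOn hinj2,
      Finset.card_product, Finset.card_product, hmA, hmB, hmC]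
    rw [show (4 * m) ^ 2 = 4 * (4 * (m * m)) by ring,
      Nat.mul_div_cancel_left _ (by norm_num : (0:ℕ) < 4)]
    ring
end

section
/- Let n be divisible by 4 and let P ∈ T_{ABC}(n) for some (A,B,C) ∈ L(n). Then A is exactly the set of minimal elements of P and C is exactly the set of maximal elements of P; consequently the ordered partition (A,B,C) ∈ L(n) with P ∈ T_{ABC}(n) is uniquely determined by P. -/
lemma minmax_aux (n : ℕ) (hn : 4 ∣ n) (A B C : Finset (Fin n))
    (hL : LPart n A B C) (P : Set (Fin n × Fin n)) (hT : TABC n A B C P) :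
    (↑A = {x : Fin n | ∀ y : Fin n, (y, x) ∉ P}) ∧
    (↑C = {x : Fin n | ∀ y : Fin n, (x, y) ∉ P}) := by
  obtain ⟨⟨hirr, htrans⟩, hlev, hii⟩ := hT
  obtain ⟨hAB, hAC, hBC, huniv, hcA, hcC, hcB⟩ := hL
  have key : ∀ x y : Fin n,
      ((x ∈ A ∧ y ∈ A) ∨ (x ∈ B ∧ y ∈ B) ∨ (x ∈ C ∧ y ∈ C)) → (x, y) ∉ P := by
    intro x y hxy hP
    have hne : x ≠ y := by rintro rfl; exact hirr x hP
    rcases hlev x y hxy hne with h | h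
    · exact h (fun z hz => htrans z x y hz hP)
    · exact h (fun z hz => htrans x y z hP hz)
  have hmem : ∀ x : Fin n, x ∈ A ∨ x ∈ B ∨ x ∈ C := by
    intro x
    have h := Finset.mem_univ x
    rw [← huniv] at h
    simpa [Finset.mem_union, or_assoc] using h
  have hpos : ∀ _ : Fin n, A.Nonempty ∧ B.Nonempty ∧ C.Nonempty := by
    intro x
    have hn0 : 0 < n := x.pos
    have h4 : 4 ≤ n := Nat.le_of_dvd hn0 hn
    refine ⟨Finset.card_pos.mp ?_, Finset.card_pos.mp ?_, Finset.card_pos.mp ?_⟩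
    · rw [hcA]; omega
    · rw [hcB]; omega
    · rw [hcC]; omega
  constructor
  · ext x
    simp only [Finset.mem_coe, Set.mem_setOf_eq]
    constructor
    · intro hxA y hyP
      obtain ⟨⟨a, ha⟩, ⟨b, hb⟩, ⟨c, hc⟩⟩ := hpos x
      rcases hmem y with hyA | hyB | hyC
      · exact key y x (Or.inl ⟨hyA, hxA⟩) hyP
      · obtain ⟨_, ⟨a', ha'1⟩, _⟩ := hii a ha y hyB c hc
        obtain ⟨ha'A, ha'y⟩ := ha'1
        exact key a' x (Or.inl ⟨ha'A, hxA⟩) (htrans a' y x ha'y hyP)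
      · obtain ⟨⟨z, hz⟩, _, _⟩ := hii x hxA b hb y hyC
        obtain ⟨⟨hxz, _⟩, hzy⟩ := hz
        exact hirr x (htrans x z x hxz (htrans z y x hzy hyP))
    · intro hmin
      rcases hmem x with hxA | hxB | hxC
      · exact hxA
      · obtain ⟨⟨a, ha⟩, ⟨b, hb⟩, ⟨c, hc⟩⟩ := hpos x
        obtain ⟨_, ⟨a', ⟨_, ha'x⟩⟩, _⟩ := hii a ha x hxB c hc
        exact absurd ha'x (hmin a')
      · obtain ⟨⟨a, ha⟩, ⟨b, hb⟩, ⟨c, hc⟩⟩ := hpos x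
        obtain ⟨⟨z, ⟨_, hzx⟩⟩, _, _⟩ := hii a ha b hb x hxC
        exact absurd hzx (hmin z)
  · ext x
    simp only [Finset.mem_coe, Set.mem_setOf_eq]
    constructor
    · intro hxC y hxy
      obtain ⟨⟨a, ha⟩, ⟨b, hb⟩, ⟨c, hc⟩⟩ := hpos x
      rcases hmem y with hyA | hyB | hyC
      · obtain ⟨⟨z, ⟨⟨hyz, _⟩, hzx⟩⟩, _, _⟩ := hii y hyA b hb x hxC
        exact hirr x (htrans x y x hxy (htrans y z x hyz hzx))
      · obtain ⟨_, _, ⟨c', ⟨hyc', hc'C⟩⟩⟩ := hii a ha y hyB c hc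
        exact key x c' (Or.inr (Or.inr ⟨hxC, hc'C⟩)) (htrans x y c' hxy hyc')
      · exact key x y (Or.inr (Or.inr ⟨hxC, hyC⟩)) hxy
    · intro hmax
      rcases hmem x with hxA | hxB | hxC
      · obtain ⟨⟨a, ha⟩, ⟨b, hb⟩, ⟨c, hc⟩⟩ := hpos x
        obtain ⟨⟨z, ⟨⟨hxz, _⟩, _⟩⟩, _, _⟩ := hii x hxA b hb c hc
        exact absurd hxz (hmax z)
      · obtain ⟨⟨a, ha⟩, ⟨b, hb⟩, ⟨c, hc⟩⟩ := hpos x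
        obtain ⟨_, _, ⟨c', ⟨hxc', _⟩⟩⟩ := hii a ha x hxB c hc
        exact absurd hxc' (hmax c')
      · exact hxC

/-- for `P ∈ T_{ABC}(n)`, `A` is exactly the set of minimal
elements of `P` and `C` is exactly the set of maximal elements of `P`;
consequently the ordered partition `(A,B,C) ∈ L(n)` with `P ∈ T_{ABC}(n)` is
uniquely determined by `P`. -/
theorem stmt7 (n : ℕ) (hn : 4 ∣ n) (A B C : Finset (Fin n))
    (hL : LPart n A B C) (P : Set (Fin n × Fin n)) (hT : TABC n A B C P) :
    (↑A = {x : Fin n | ∀ y : Fin n, (y, x) ∉ P}) ∧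
    (↑C = {x : Fin n | ∀ y : Fin n, (x, y) ∉ P}) ∧
    (∀ A' B' C' : Finset (Fin n), LPart n A' B' C' → TABC n A' B' C' P →
      A' = A ∧ B' = B ∧ C' = C) := by
  obtain ⟨hAeq, hCeq⟩ := minmax_aux n hn A B C hL P hT
  refine ⟨hAeq, hCeq, ?_⟩
  intro A' B' C' hL' hT'
  obtain ⟨hA'eq, hC'eq⟩ := minmax_aux n hn A' B' C' hL' P hT'
  have hA : A' = A := Finset.coe_injective (hA'eq.trans hAeq.symm)
  have hC : C' = C := Finset.coe_injective (hC'eq.trans hCeq.symm)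
  refine ⟨hA, ?_, hC⟩
  obtain ⟨hAB, hAC, hBC, huniv, -⟩ := hL
  obtain ⟨hAB', hAC', hBC', huniv', -⟩ := hL'
  subst hA hC
  ext x
  have h1 : x ∈ A' ∨ x ∈ B ∨ x ∈ C' := by
    have h := Finset.mem_univ x
    rw [← huniv] at h
    simpa [Finset.mem_union, or_assoc] using h
  have h2 : x ∈ A' ∨ x ∈ B' ∨ x ∈ C' := by
    have h := Finset.mem_univ x
    rw [← huniv'] at h
    simpa [Finset.mem_union, or_assoc] using h
  constructor
  · intro hxB'
    rcases h1 with h | h | h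
    · exact absurd hxB' (Finset.disjoint_left.mp hAB' h)
    · exact h
    · exact absurd h (Finset.disjoint_left.mp hBC' hxB')
  · intro hxB
    rcases h2 with h | h | h
    · exact absurd hxB (Finset.disjoint_left.mp hAB h)
    · exact h
    · exact absurd h (Finset.disjoint_left.mp hBC hxB)
end

section
/- Let {0,…,n−1} be partitioned into pairwise disjoint sets A, B, C. The map P ↦ P ∩ ((A×B) ∪ (B×C)) is a bijection from U_{ABC}(n) onto the powerset of (A×B) ∪ (B×C); its inverse sends a subset S ⊆ (A×B) ∪ (B×C) to the transitive closure of S. -/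
/-- `P ∈ U_{ABC}(n)`: a strict partial order on `{0,…,n-1}` whose covering
relation satisfies `P^∨ ⊆ (A×B) ∪ (B×C)`. -/
def UABC (n : ℕ) (A B C : Finset (Fin n)) (P : Set (Fin n × Fin n)) : Prop :=
  IsSPO P ∧ covRel P ⊆ (↑A ×ˢ ↑B) ∪ (↑B ×ˢ ↑C)

/-- The transitive closure of a set of ordered pairs. -/
def tcl {α : Type*} (S : Set (α × α)) : Set (α × α) :=
  {p | Relation.TransGen (fun x y : α => (x, y) ∈ S) p.1 p.2}

/-!
A subset `S` of `W = (A×B) ∪ (B×C)` has no paths of length three, so its transitive closure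
consists of `S` together with the two-step pairs `a → b → c`, which lie in `A×C` and hence
outside `W`; thus `tcl S ∩ W = S`, `tcl S` is irreflexive, and its covering pairs lie in `S`.
Conversely, in a finite strict order every pair is a chain of covering pairs, so a partial
order whose covering relation lies in `W` is the transitive closure of its trace on `W`.
-/

section TransitiveClosure

variable {α : Type*} {S T P : Set (α × α)}

theorem mem_tcl {x y : α} : (x, y) ∈ tcl S ↔ Relation.TransGen (fun a b => (a, b) ∈ S) x y :=
  Iff.rfl

theorem subset_tcl : S ⊆ tcl S := fun _ h => .single h

theorem tcl_mono (h : S ⊆ T) : tcl S ⊆ tcl T :=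
  fun p hp => Relation.TransGen.mono (fun _ _ hab => h hab) p.1 p.2 hp

theorem tcl_trans {x y z : α} (hxy : (x, y) ∈ tcl S) (hyz : (y, z) ∈ tcl S) : (x, z) ∈ tcl S :=
  Relation.TransGen.trans hxy hyz

theorem tcl_subset (hP : ∀ x y z, (x, y) ∈ P → (y, z) ∈ P → (x, z) ∈ P) (hSP : S ⊆ P) :
    tcl S ⊆ P := by
  rintro ⟨x, y⟩ h
  rw [mem_tcl] at h
  induction h with
  | single h => exact hSP h
  | tail _ h ih => exact hP _ _ _ ih (hSP h)

theorem covRel_tcl_subset : covRel (tcl S) ⊆ S := by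
  rintro ⟨x, y⟩ ⟨hxy, hcov⟩
  rw [mem_tcl] at hxy
  cases hxy with
  | single h => exact h
  | tail hxz hzy => exact (hcov ⟨_, hxz, subset_tcl hzy⟩).elim

theorem mem_tcl_iff_of_no_path_three
    (hS : ∀ x y z w, (x, y) ∈ S → (y, z) ∈ S → (z, w) ∈ S → False) {x y : α} :
    (x, y) ∈ tcl S ↔ (x, y) ∈ S ∨ ∃ z, (x, z) ∈ S ∧ (z, y) ∈ S := by
  constructor
  · intro h
    rw [mem_tcl] at h
    induction h with
    | single h => exact .inl h
    | tail _ hmz ih =>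
      rcases ih with hxm | ⟨w, hxw, hwm⟩
      · exact .inr ⟨_, hxm, hmz⟩
      · exact (hS _ _ _ _ hxw hwm hmz).elim
  · rintro (h | ⟨z, hxz, hzy⟩)
    · exact subset_tcl h
    · exact .tail (.single hxz) hzy

end TransitiveClosure

section CoveringChains

variable {α : Type*} {P : Set (α × α)}

def between (P : Set (α × α)) (x y : α) : Set α :=
  {w | (x, w) ∈ P ∧ (w, y) ∈ P}

theorem between_ssubset_left (hP : IsSPO P) {x y z : α} (hxz : (x, z) ∈ P) (hzy : (z, y) ∈ P) :
    between P x z ⊂ between P x y :=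
  ⟨fun _ hw => ⟨hw.1, hP.2 _ _ _ hw.2 hzy⟩, fun h => hP.1 z (h ⟨hxz, hzy⟩).2⟩

theorem between_ssubset_right (hP : IsSPO P) {x y z : α} (hxz : (x, z) ∈ P) (hzy : (z, y) ∈ P) :
    between P z y ⊂ between P x y :=
  ⟨fun _ hw => ⟨hP.2 _ _ _ hxz hw.1, hw.2⟩, fun h => hP.1 z (h ⟨hxz, hzy⟩).1⟩

theorem subset_tcl_covRel [Finite α] (hP : IsSPO P) : P ⊆ tcl (covRel P) := by
  suffices ∀ k x y, (between P x y).ncard = k → (x, y) ∈ P → (x, y) ∈ tcl (covRel P) from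
    fun p hp => this _ p.1 p.2 rfl hp
  intro k
  induction k using Nat.strong_induction_on with
  | _ k ih =>
    rintro x y rfl hxy
    by_cases hcov : ∃ z, (x, z) ∈ P ∧ (z, y) ∈ P
    · obtain ⟨z, hxz, hzy⟩ := hcov
      have hl := Set.ncard_lt_ncard (between_ssubset_left hP hxz hzy)
      have hr := Set.ncard_lt_ncard (between_ssubset_right hP hxz hzy)
      exact tcl_trans (ih _ hl x z rfl hxz) (ih _ hr z y rfl hzy)
    · exact subset_tcl ⟨hxy, hcov⟩

theorem tcl_inter_eq_of_covRel_subset [Finite α] {W : Set (α × α)} (hP : IsSPO P)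
    (hW : covRel P ⊆ W) : tcl (P ∩ W) = P :=
  (tcl_subset hP.2 Set.inter_subset_left).antisymm
    ((subset_tcl_covRel hP).trans (tcl_mono fun _ hp => ⟨hp.1, hW hp⟩))

end CoveringChains

section ThreeLayers

variable {α : Type*} {A B C : Set α} {S : Set (α × α)}
  (hAB : Disjoint A B) (hAC : Disjoint A C) (hBC : Disjoint B C)
  (hS : S ⊆ A ×ˢ B ∪ B ×ˢ C)
include hAB hAC hBC hS

theorem no_path_three_of_subset_layers {x y z w : α} (hxy : (x, y) ∈ S) (hyz : (y, z) ∈ S)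
    (hzw : (z, w) ∈ S) : False := by
  have := hS hxy; have := hS hyz; have := hS hzw
  simp only [Set.mem_union, Set.mem_prod] at *
  grind

theorem mem_layers_of_two_step {x y z : α} (hxz : (x, z) ∈ S) (hzy : (z, y) ∈ S) :
    x ∈ A ∧ y ∈ C := by
  have := hS hxz; have := hS hzy
  simp only [Set.mem_union, Set.mem_prod] at *
  grind

theorem mem_tcl_iff_of_subset_layers {x y : α} :
    (x, y) ∈ tcl S ↔ (x, y) ∈ S ∨ ∃ z, (x, z) ∈ S ∧ (z, y) ∈ S :=
  mem_tcl_iff_of_no_path_three fun _ _ _ _ =>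
    no_path_three_of_subset_layers hAB hAC hBC hS

theorem tcl_inter_layers_eq :
    tcl S ∩ (A ×ˢ B ∪ B ×ˢ C) = S := by
  refine subset_antisymm ?_ fun p hp => ⟨subset_tcl hp, hS hp⟩
  rintro ⟨x, y⟩ ⟨hxy, hW⟩
  refine ((mem_tcl_iff_of_subset_layers hAB hAC hBC hS).1 hxy).resolve_right ?_
  rintro ⟨z, hxz, hzy⟩
  have := mem_layers_of_two_step hAB hAC hBC hS hxz hzy
  simp only [Set.mem_union, Set.mem_prod] at hW
  grind

theorem isSPO_tcl_of_subset_layers : IsSPO (tcl S) := by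
  refine ⟨fun x hx => ?_, fun _ _ _ => tcl_trans⟩
  rcases (mem_tcl_iff_of_subset_layers hAB hAC hBC hS).1 hx with hxx | ⟨z, hxz, hzx⟩
  · have := hS hxx
    simp only [Set.mem_union, Set.mem_prod] at this
    grind
  · have := mem_layers_of_two_step hAB hAC hBC hS hxz hzx
    exact Set.disjoint_left.1 hAC this.1 this.2

end ThreeLayers

theorem stmt11_general (n : ℕ) (A B C : Finset (Fin n))
    (hAB : Disjoint A B) (hAC : Disjoint A C) (hBC : Disjoint B C) :
    Set.BijOn (fun P : Set (Fin n × Fin n) => P ∩ ((↑A ×ˢ ↑B) ∪ (↑B ×ˢ ↑C)))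
      {P | UABC n A B C P}
      {S | S ⊆ (↑A ×ˢ ↑B) ∪ (↑B ×ˢ ↑C)} ∧
    (∀ P : Set (Fin n × Fin n), UABC n A B C P →
      tcl (P ∩ ((↑A ×ˢ ↑B) ∪ (↑B ×ˢ ↑C))) = P) ∧
    (∀ S : Set (Fin n × Fin n), S ⊆ (↑A ×ˢ ↑B) ∪ (↑B ×ˢ ↑C) →
      UABC n A B C (tcl S) ∧ tcl S ∩ ((↑A ×ˢ ↑B) ∪ (↑B ×ˢ ↑C)) = S) := by
  rw [← Finset.disjoint_coe] at hAB hAC hBC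
  have hleft : ∀ P, UABC n A B C P → tcl (P ∩ ((↑A ×ˢ ↑B) ∪ (↑B ×ˢ ↑C))) = P :=
    fun P hP => tcl_inter_eq_of_covRel_subset hP.1 hP.2
  have hright : ∀ S : Set (Fin n × Fin n), S ⊆ (↑A ×ˢ ↑B) ∪ (↑B ×ˢ ↑C) →
      UABC n A B C (tcl S) ∧ tcl S ∩ ((↑A ×ˢ ↑B) ∪ (↑B ×ˢ ↑C)) = S := fun S hS =>
    ⟨⟨isSPO_tcl_of_subset_layers hAB hAC hBC hS, covRel_tcl_subset.trans hS⟩,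
      tcl_inter_layers_eq hAB hAC hBC hS⟩
  exact ⟨Set.InvOn.bijOn ⟨hleft, fun S hS => (hright S hS).2⟩
      (fun _ _ => Set.inter_subset_right) (fun S hS => (hright S hS).1), hleft, hright⟩

/-- if `{0,…,n-1}` is partitioned into `A`, `B`, `C`, then
`P ↦ P ∩ ((A×B) ∪ (B×C))` is a bijection from `U_{ABC}(n)` onto the powerset of
`(A×B) ∪ (B×C)`, whose inverse sends a subset to its transitive closure. -/
theorem stmt11 (n : ℕ) (A B C : Finset (Fin n))
    (hAB : Disjoint A B) (hAC : Disjoint A C) (hBC : Disjoint B C)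
    (hcover : A ∪ B ∪ C = Finset.univ) :
    Set.BijOn (fun P : Set (Fin n × Fin n) => P ∩ ((↑A ×ˢ ↑B) ∪ (↑B ×ˢ ↑C)))
      {P | UABC n A B C P}
      {S | S ⊆ (↑A ×ˢ ↑B) ∪ (↑B ×ˢ ↑C)} ∧
    (∀ P : Set (Fin n × Fin n), UABC n A B C P →
      tcl (P ∩ ((↑A ×ˢ ↑B) ∪ (↑B ×ˢ ↑C))) = P) ∧
    (∀ S : Set (Fin n × Fin n), S ⊆ (↑A ×ˢ ↑B) ∪ (↑B ×ˢ ↑C) →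
      UABC n A B C (tcl S) ∧ tcl S ∩ ((↑A ×ˢ ↑B) ∪ (↑B ×ˢ ↑C)) = S) :=
  stmt11_general n A B C hAB hAC hBC
end

section
/- Let {0,…,n−1} be partitioned into pairwise disjoint sets A, B, C. Then |U_{ABC}(n)| = 2^{|A|·|B| + |B|·|C|}. In particular, if |A| = |C| = n/4 and |B| = n/2 (n divisible by 4), then |U_{ABC}(n)| = 2^{n²/4}. -/
/-- The closure of an edge set: add all composites of two consecutive edges. -/
def closF {α : Type*} (S : Set (α × α)) : Set (α × α) :=
  {p | p ∈ S ∨ ∃ b, (p.1, b) ∈ S ∧ (b, p.2) ∈ S}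

section Aux

variable {n : ℕ} {A B C : Finset (Fin n)}

lemma mem_region {P : Set (Fin n × Fin n)} (h : P ⊆ (↑A ×ˢ ↑B) ∪ (↑B ×ˢ ↑C))
    {p : Fin n × Fin n} (hp : p ∈ P) :
    (p.1 ∈ A ∧ p.2 ∈ B) ∨ (p.1 ∈ B ∧ p.2 ∈ C) := by
  rcases h hp with h' | h' <;> simp_all

lemma exists_cov {P : Set (Fin n × Fin n)} (hP : IsSPO P) {x y : Fin n}
    (hxy : (x, y) ∈ P) : ∃ w, (x, w) ∈ covRel P ∧ (w = y ∨ (w, y) ∈ P) := by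
  have wf : WellFounded (fun a b : Fin n => (a, b) ∈ P) := by
    have h1 : IsTrans (Fin n) (fun a b => (a, b) ∈ P) := ⟨fun a b c => hP.2 a b c⟩
    have h2 : IsIrrefl (Fin n) (fun a b => (a, b) ∈ P) := ⟨fun a => hP.1 a⟩
    exact Finite.wellFounded_of_trans_of_irrefl _
  obtain ⟨w, ⟨hxw, hwy⟩, hmin⟩ :=
    wf.has_min {z | (x, z) ∈ P ∧ (z = y ∨ (z, y) ∈ P)} ⟨y, hxy, Or.inl rfl⟩
  refine ⟨w, ⟨hxw, ?_⟩, hwy⟩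
  rintro ⟨z, hxz, hzw⟩
  refine hmin z ⟨hxz, Or.inr ?_⟩ hzw
  rcases hwy with rfl | h
  · exact hzw
  · exact hP.2 _ _ _ hzw h

variable (hAB : Disjoint A B) (hAC : Disjoint A C) (hBC : Disjoint B C)

include hAB hAC hBC in
/-- Decomposition: in a `UABC` order, every pair is a cover or a composite of
two covers. -/
lemma decomp {P : Set (Fin n × Fin n)} (hU : UABC n A B C P) {x y : Fin n}
    (hxy : (x, y) ∈ P) :
    (x, y) ∈ covRel P ∨ ∃ b, (x, b) ∈ covRel P ∧ (b, y) ∈ covRel P := by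
  have dAB := Finset.disjoint_left.1 hAB
  have dAC := Finset.disjoint_left.1 hAC
  have dBC := Finset.disjoint_left.1 hBC
  obtain ⟨hP, hcov⟩ := hU
  obtain ⟨w, hxw, hwy⟩ := exists_cov hP hxy
  rcases hwy with rfl | hwy
  · exact Or.inl hxw
  · rcases mem_region hcov hxw with ⟨hx, hw⟩ | ⟨hx, hw⟩
    · -- w ∈ B; get a cover (w,v)
      obtain ⟨v, hwv, hvy⟩ := exists_cov hP hwy
      rcases mem_region hcov hwv with ⟨hw', hv⟩ | ⟨hw', hv⟩
      · exact absurd hw' (fun h => dAB h hw)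
      · rcases hvy with rfl | hvy
        · exact Or.inr ⟨w, hxw, hwv⟩
        · obtain ⟨u, hvu, _⟩ := exists_cov hP hvy
          rcases mem_region hcov hvu with ⟨hv', _⟩ | ⟨hv', _⟩
          · exact absurd hv' (fun h => dAC h hv)
          · exact absurd hv' (fun h => dBC h hv)
    · -- w ∈ C: impossible since (w,y) ∈ P gives a cover starting at w
      obtain ⟨u, hwu, _⟩ := exists_cov hP hwy
      rcases mem_region hcov hwu with ⟨hw', _⟩ | ⟨hw', _⟩
      · exact absurd hw' (fun h => dAC h hw)
      · exact absurd hw' (fun h => dBC h hw)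

include hAB hAC hBC in
lemma comp_mem {S : Set (Fin n × Fin n)}
    (hS : S ⊆ (↑A ×ˢ ↑B) ∪ (↑B ×ˢ ↑C)) {a b c : Fin n}
    (h1 : (a, b) ∈ S) (h2 : (b, c) ∈ S) : a ∈ A ∧ b ∈ B ∧ c ∈ C := by
  have dAB := Finset.disjoint_left.1 hAB
  have dAC := Finset.disjoint_left.1 hAC
  have dBC := Finset.disjoint_left.1 hBC
  rcases mem_region hS h1 with ⟨u1, v1⟩ | ⟨u1, v1⟩ <;>
    rcases mem_region hS h2 with ⟨u2, v2⟩ | ⟨u2, v2⟩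
  · exact absurd u2 (fun h => dAB h v1)
  · exact ⟨u1, v1, v2⟩
  · exact absurd u2 (fun h => dAC h v1)
  · exact absurd u2 (fun h => dBC h v1)

include hAB hAC hBC in
lemma edge_mem {S : Set (Fin n × Fin n)}
    (hS : S ⊆ (↑A ×ˢ ↑B) ∪ (↑B ×ˢ ↑C)) {a c : Fin n}
    (h : (a, c) ∈ closF S) :
    (a ∈ A ∧ c ∈ B) ∨ (a ∈ B ∧ c ∈ C) ∨ (a ∈ A ∧ c ∈ C) := by
  rcases h with h | ⟨b, h1, h2⟩
  · rcases mem_region hS h with h' | h'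
    exacts [Or.inl h', Or.inr (Or.inl h')]
  · obtain ⟨u, _, v⟩ := comp_mem hAB hAC hBC hS h1 h2
    exact Or.inr (Or.inr ⟨u, v⟩)

include hAB hAC hBC in
lemma closF_UABC {S : Set (Fin n × Fin n)}
    (hS : S ⊆ (↑A ×ˢ ↑B) ∪ (↑B ×ˢ ↑C)) : UABC n A B C (closF S) := by
  have dAB := Finset.disjoint_left.1 hAB
  have dAC := Finset.disjoint_left.1 hAC
  have dBC := Finset.disjoint_left.1 hBC
  -- from (x,y) ∈ closF S with y ∈ B, conclude (x,y) ∈ S and x ∈ A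
  have inS_of_right : ∀ x y : Fin n, (x, y) ∈ closF S → y ∈ B →
      (x, y) ∈ S ∧ x ∈ A := by
    intro x y h hy
    rcases h with h | ⟨b, h1, h2⟩
    · rcases mem_region hS h with ⟨u, _⟩ | ⟨_, v⟩
      · exact ⟨h, u⟩
      · exact absurd hy (fun h' => dBC h' v)
    · obtain ⟨_, _, v⟩ := comp_mem hAB hAC hBC hS h1 h2
      exact absurd hy (fun h' => dBC h' v)
  have inS_of_left : ∀ x y : Fin n, (x, y) ∈ closF S → x ∈ B →
      (x, y) ∈ S ∧ y ∈ C := by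
    intro x y h hx
    rcases h with h | ⟨b, h1, h2⟩
    · rcases mem_region hS h with ⟨u, _⟩ | ⟨_, v⟩
      · exact absurd hx (fun h' => dAB u h')
      · exact ⟨h, v⟩
    · obtain ⟨u, _, _⟩ := comp_mem hAB hAC hBC hS h1 h2
      exact absurd hx (fun h' => dAB u h')
  constructor
  · constructor
    · intro x hx
      rcases edge_mem hAB hAC hBC hS hx with ⟨h1, h2⟩ | ⟨h1, h2⟩ | ⟨h1, h2⟩
      exacts [dAB h1 h2, dBC h1 h2, dAC h1 h2]
    · intro x y z hxy hyz
      -- y is in B ∪ C from the first edge, in A ∪ B from the second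
      have hyBC : y ∈ B ∨ y ∈ C := by
        rcases edge_mem hAB hAC hBC hS hxy with ⟨_, h⟩ | ⟨_, h⟩ | ⟨_, h⟩
        exacts [Or.inl h, Or.inr h, Or.inr h]
      have hyAB : y ∈ A ∨ y ∈ B := by
        rcases edge_mem hAB hAC hBC hS hyz with ⟨h, _⟩ | ⟨h, _⟩ | ⟨h, _⟩
        exacts [Or.inl h, Or.inr h, Or.inl h]
      have hyB : y ∈ B := by
        rcases hyBC with h | h
        · exact h
        · rcases hyAB with h' | h'
          · exact absurd h (fun hh => dAC h' hh)
          · exact absurd h (fun hh => dBC h' hh)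
      obtain ⟨hxyS, _⟩ := inS_of_right _ _ hxy hyB
      obtain ⟨hyzS, _⟩ := inS_of_left _ _ hyz hyB
      exact Or.inr ⟨y, hxyS, hyzS⟩
  · rintro ⟨x, y⟩ ⟨hp, hnc⟩
    rcases hp with hp | ⟨b, hxb, hby⟩
    · exact hS hp
    · exact absurd ⟨b, Or.inl hxb, Or.inl hby⟩ hnc

include hAB hAC hBC in
lemma covRel_closF {S : Set (Fin n × Fin n)}
    (hS : S ⊆ (↑A ×ˢ ↑B) ∪ (↑B ×ˢ ↑C)) : covRel (closF S) = S := by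
  have dAB := Finset.disjoint_left.1 hAB
  have dAC := Finset.disjoint_left.1 hAC
  have dBC := Finset.disjoint_left.1 hBC
  ext ⟨x, y⟩
  constructor
  · rintro ⟨hp | ⟨b, hxb, hby⟩, hnc⟩
    · exact hp
    · exact absurd ⟨b, Or.inl hxb, Or.inl hby⟩ hnc
  · intro hp
    refine ⟨Or.inl hp, ?_⟩
    rintro ⟨z, hxz, hzy⟩
    rcases mem_region hS hp with ⟨hx, hy⟩ | ⟨hx, hy⟩
    · -- x ∈ A, y ∈ B: (z,y) ∈ closF S with y ∈ B forces z ∈ A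
      have hzA : z ∈ A := by
        rcases edge_mem hAB hAC hBC hS hzy with ⟨h, _⟩ | ⟨_, h⟩ | ⟨_, h⟩
        · exact h
        · exact absurd hy (fun h' => dBC h' h)
        · exact absurd hy (fun h' => dBC h' h)
      -- but (x,z) ∈ closF S ends in B ∪ C
      rcases edge_mem hAB hAC hBC hS hxz with ⟨_, h⟩ | ⟨_, h⟩ | ⟨_, h⟩
      exacts [dAB hzA h, dAC hzA h, dAC hzA h]
    · -- x ∈ B, y ∈ C: (x,z) with x ∈ B forces z ∈ C
      have hzC : z ∈ C := by
        rcases edge_mem hAB hAC hBC hS hxz with ⟨h, _⟩ | ⟨_, h⟩ | ⟨h, _⟩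
        · exact absurd hx (fun h' => dAB h h')
        · exact h
        · exact absurd hx (fun h' => dAB h h')
      rcases edge_mem hAB hAC hBC hS hzy with ⟨h, _⟩ | ⟨h, _⟩ | ⟨h, _⟩
      exacts [dAC h hzC, dBC h hzC, dAC h hzC]

include hAB hAC hBC in
lemma closF_covRel {P : Set (Fin n × Fin n)} (hU : UABC n A B C P) :
    closF (covRel P) = P := by
  ext ⟨x, y⟩
  constructor
  · rintro (h | ⟨b, h1, h2⟩)
    · exact h.1
    · exact hU.1.2 _ _ _ h1.1 h2.1
  · intro h
    exact decomp hAB hAC hBC hU h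

end Aux

/-- if `{0,…,n-1}` is partitioned into `A`, `B`, `C`, then
`|U_{ABC}(n)| = 2^(|A|·|B| + |B|·|C|)`; in particular if `|A| = |C| = n/4` and
`|B| = n/2` (with `4 ∣ n`), then `|U_{ABC}(n)| = 2^(n²/4)`. -/
theorem stmt12 (n : ℕ) (A B C : Finset (Fin n))
    (hAB : Disjoint A B) (hAC : Disjoint A C) (hBC : Disjoint B C)
    (hcover : A ∪ B ∪ C = Finset.univ) :
    {P : Set (Fin n × Fin n) | UABC n A B C P}.ncard =
      2 ^ (A.card * B.card + B.card * C.card) ∧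
    (4 ∣ n → A.card = n / 4 → C.card = n / 4 → B.card = n / 2 →
      {P : Set (Fin n × Fin n) | UABC n A B C P}.ncard = 2 ^ (n ^ 2 / 4)) := by
  classical
  set R : Finset (Fin n × Fin n) := (A ×ˢ B) ∪ (B ×ˢ C) with hRdef
  have hRcoe : (↑R : Set (Fin n × Fin n)) =
      ((↑A : Set (Fin n)) ×ˢ (↑B : Set (Fin n))) ∪
        ((↑B : Set (Fin n)) ×ˢ (↑C : Set (Fin n))) := by
    simp [hRdef]
  have key : {P : Set (Fin n × Fin n) | UABC n A B C P} =
      closF '' {S : Set (Fin n × Fin n) | S ⊆ ↑R} := by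
    ext P
    simp only [Set.mem_setOf_eq, Set.mem_image]
    constructor
    · intro hU
      refine ⟨covRel P, ?_, closF_covRel hAB hAC hBC hU⟩
      rw [hRcoe]; exact hU.2
    · rintro ⟨S, hS, rfl⟩
      rw [hRcoe] at hS
      exact closF_UABC hAB hAC hBC hS
  have hinj : Set.InjOn closF {S : Set (Fin n × Fin n) | S ⊆ ↑R} := by
    intro S hS T hT hST
    rw [hRcoe] at hS hT
    have := covRel_closF hAB hAC hBC hS
    rw [hST, covRel_closF hAB hAC hBC hT] at this
    exact this.symm
  have hdom : {S : Set (Fin n × Fin n) | S ⊆ ↑R} =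
      (fun t : Finset (Fin n × Fin n) => (↑t : Set (Fin n × Fin n))) ''
        ↑R.powerset := by
    ext S
    simp only [Set.mem_setOf_eq, Set.mem_image, Finset.mem_coe,
      Finset.mem_powerset]
    constructor
    · intro h
      refine ⟨S.toFinset, ?_, Set.coe_toFinset S⟩
      intro x hx
      have : x ∈ S := by simpa using hx
      exact (h this)
    · rintro ⟨t, ht, rfl⟩
      exact fun x hx => ht hx
  have hcount : {P : Set (Fin n × Fin n) | UABC n A B C P}.ncard = 2 ^ R.card := by
    rw [key, Set.ncard_image_of_injOn hinj, hdom,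
      Set.ncard_image_of_injective _ Finset.coe_injective,
      Set.ncard_coe_finset, Finset.card_powerset]
  have hRcard : R.card = A.card * B.card + B.card * C.card := by
    rw [hRdef, Finset.card_union_of_disjoint, Finset.card_product,
      Finset.card_product]
    rw [Finset.disjoint_left]
    rintro ⟨x, y⟩ h1 h2
    simp only [Finset.mem_product] at h1 h2
    exact Finset.disjoint_left.1 hAB h1.1 h2.1
  refine ⟨by rw [hcount, hRcard], ?_⟩
  intro h4 hA hC hB
  rw [hcount, hRcard, hA, hB, hC]
  obtain ⟨k, rfl⟩ := h4
  congr 1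
  have h1 : 4 * k / 4 = k := by omega
  have h2 : 4 * k / 2 = 2 * k := by omega
  rw [h1, h2]
  have : (4 * k) ^ 2 = 16 * k ^ 2 := by ring
  rw [this]
  have : 16 * k ^ 2 / 4 = 4 * k ^ 2 := by omega
  rw [this]
  ring
end

section
/- For n divisible by 4 one has T(n) ⊆ U(n), and with n = 4m the quantity α_n := 1 − |T(n)|/|U(n)| is o(1/n): the sequence 4m · (1 − |T(4m)|/|U(4m)|) tends to 0 as m → ∞. -/
/-- `T(n) = ∪_{(A,B,C) ∈ L(n)} T_{ABC}(n)`. -/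
def Tset (n : ℕ) : Set (Set (Fin n × Fin n)) :=
  {P | ∃ A B C : Finset (Fin n), LPart n A B C ∧ TABC n A B C P}

/-- `U(n) = ∪_{(A,B,C) ∈ L(n)} U_{ABC}(n)`. -/
def Uset (n : ℕ) : Set (Set (Fin n × Fin n)) :=
  {P | ∃ A B C : Finset (Fin n), LPart n A B C ∧ UABC n A B C P}

section StrictOrder

variable {α : Type*} {P : Set (α × α)}

theorem IsSPO.wellFounded [Finite α] (hP : IsSPO P) : WellFounded fun x y => (x, y) ∈ P :=
  have : IsTrans α fun x y => (x, y) ∈ P := ⟨hP.2⟩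
  have : Std.Irrefl fun x y : α => (x, y) ∈ P := ⟨hP.1⟩
  Finite.wellFounded_of_trans_of_irrefl _

theorem IsSPO.wellFounded_swap [Finite α] (hP : IsSPO P) : WellFounded fun x y => (y, x) ∈ P :=
  have : IsTrans α fun x y => (y, x) ∈ P := ⟨fun x y z hxy hyz => hP.2 z y x hyz hxy⟩
  have : Std.Irrefl fun x y : α => (y, x) ∈ P := ⟨hP.1⟩
  Finite.wellFounded_of_trans_of_irrefl _

theorem IsSPO.exists_covRel_of_mem [Finite α] (hP : IsSPO P) {x y : α} (h : (x, y) ∈ P) :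
    ∃ z, (x, z) ∈ covRel P ∧ (z = y ∨ (z, y) ∈ P) := by
  obtain ⟨z, ⟨hxz, hzy⟩, hmin⟩ := hP.wellFounded.has_min
    {z | (x, z) ∈ P ∧ (z = y ∨ (z, y) ∈ P)} ⟨y, h, .inl rfl⟩
  refine ⟨z, ⟨hxz, fun ⟨w, hxw, hwz⟩ => hmin w ⟨hxw, .inr ?_⟩ hwz⟩, hzy⟩
  rcases hzy with rfl | hzy
  exacts [hwz, hP.2 _ _ _ hwz hzy]

theorem IsSPO.mem_iff_transGen_covRel [Finite α] (hP : IsSPO P) {x y : α} :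
    (x, y) ∈ P ↔ Relation.TransGen (fun a b => (a, b) ∈ covRel P) x y := by
  refine ⟨fun h => ?_, fun h => ?_⟩
  · induction x using hP.wellFounded_swap.induction generalizing y with
    | _ x ih =>
      obtain ⟨z, hxz, rfl | hzy⟩ := hP.exists_covRel_of_mem h
      · exact .single hxz
      · exact .head hxz (ih z hxz.1 hzy)
  · induction h with
    | single h => exact h.1
    | tail _ h ih => exact hP.2 _ _ _ ih h.1

theorem IsSPO.eq_of_covRel_eq [Finite α] {Q : Set (α × α)} (hP : IsSPO P) (hQ : IsSPO Q)
    (h : covRel P = covRel Q) : P = Q := by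
  ext ⟨x, y⟩
  rw [hP.mem_iff_transGen_covRel, hQ.mem_iff_transGen_covRel, h]

end StrictOrder

theorem card_filter_and_le_of_imp {γ : Type*} {E : Finset γ} {c : Prop} [Decidable c]
    {Q : Finset γ → Prop} [DecidablePred Q] {β : ℝ} (hβ : 0 ≤ β)
    (h : c → ((E.powerset.filter Q).card : ℝ) ≤ β) :
    ((E.powerset.filter fun R => c ∧ Q R).card : ℝ) ≤ β := by
  by_cases hc : c
  · simpa [hc] using h hc
  · simpa [hc] using hβ

section TraceCounting

variable {γ ι : Type*} [DecidableEq γ]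

theorem card_filter_forall_insert_inter_ne_le [DecidableEq ι] (w S : ι → Finset γ) {j : ι}
    {I : Finset ι} (hS : S j ⊆ w j) (hdisj : ∀ i ∈ I, Disjoint (w j) (w i)) (E : Finset γ) :
    (E.powerset.filter fun R => ∀ i ∈ insert j I, R ∩ w i ≠ S i).card ≤
      (2 ^ (w j).card - 1) *
        ((E \ w j).powerset.filter fun R => ∀ i ∈ I, R ∩ w i ≠ S i).card := by
  have h := Finset.card_le_card_of_injOn (fun R => (R ∩ w j, R \ w j))
    (s := E.powerset.filter fun R => ∀ i ∈ insert j I, R ∩ w i ≠ S i)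
    (t := ((w j).powerset.erase (S j)) ×ˢ
      ((E \ w j).powerset.filter fun R => ∀ i ∈ I, R ∩ w i ≠ S i))
    (fun R hR => by
      simp only [Finset.mem_coe, Finset.mem_filter, Finset.mem_powerset,
        Finset.forall_mem_insert] at hR
      simp only [Finset.coe_product, Set.mem_prod, Finset.mem_coe, Finset.mem_erase,
        Finset.mem_powerset, Finset.mem_filter]
      refine ⟨⟨hR.2.1, Finset.inter_subset_right⟩, Finset.sdiff_subset_sdiff hR.1 le_rfl,
        fun i hi => ?_⟩
      rw [Finset.sdiff_inter_right_comm, Finset.sdiff_eq_self_of_disjoint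
        ((hdisj i hi).symm.mono_left Finset.inter_subset_right)]
      exact hR.2.2 i hi)
    (fun R _ R' _ h => by
      simp only [Prod.mk.injEq] at h
      rw [← Finset.sdiff_union_inter R (w j), h.1, h.2, Finset.sdiff_union_inter])
  rwa [Finset.card_product, Finset.card_erase_of_mem (Finset.mem_powerset.mpr hS),
    Finset.card_powerset] at h

theorem card_filter_forall_inter_ne_mul_le (w S : ι → Finset γ) {k : ℕ} (I : Finset ι)
    (hS : ∀ i ∈ I, S i ⊆ w i) (hw : ∀ i ∈ I, (w i).card = k)
    (hdisj : (I : Set ι).PairwiseDisjoint w) (E : Finset γ) (hwE : ∀ i ∈ I, w i ⊆ E) :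
    (E.powerset.filter fun R => ∀ i ∈ I, R ∩ w i ≠ S i).card * 2 ^ (k * I.card) ≤
      (2 ^ k - 1) ^ I.card * 2 ^ E.card := by
  classical
  induction I using Finset.induction_on generalizing E with
  | empty => simp
  | insert j I hj ih =>
    have hdisj' : ∀ i ∈ I, Disjoint (w j) (w i) := fun i hi =>
      hdisj (by simp) (by simp [hi]) (by rintro rfl; exact hj hi)
    have hstep := card_filter_forall_insert_inter_ne_le w S (hS j (by simp)) hdisj' E
    have hIH := ih (fun i hi => hS i (by simp [hi])) (fun i hi => hw i (by simp [hi]))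
      (hdisj.subset (by simp)) (E \ w j) fun i hi =>
        Finset.subset_sdiff.mpr ⟨hwE i (by simp [hi]), (hdisj' i hi).symm⟩
    have hcard : (E \ w j).card + k = E.card := by
      have hwjE := hwE j (by simp)
      rw [Finset.card_sdiff_of_subset hwjE, ← hw j (by simp)]
      exact Nat.sub_add_cancel (Finset.card_le_card hwjE)
    rw [hw j (by simp)] at hstep
    rw [Finset.card_insert_of_notMem hj]
    calc _ ≤ (2 ^ k - 1) * ((E \ w j).powerset.filter fun R => ∀ i ∈ I, R ∩ w i ≠ S i).card *
          2 ^ (k * (I.card + 1)) := Nat.mul_le_mul_right _ hstep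
      _ = (2 ^ k - 1) * (((E \ w j).powerset.filter fun R => ∀ i ∈ I, R ∩ w i ≠ S i).card *
          2 ^ (k * I.card)) * 2 ^ k := by ring
      _ ≤ (2 ^ k - 1) * ((2 ^ k - 1) ^ I.card * 2 ^ (E \ w j).card) * 2 ^ k := by gcongr
      _ = (2 ^ k - 1) ^ (I.card + 1) * 2 ^ E.card := by rw [← hcard]; ring

theorem card_filter_le_of_forall_inter_ne (w S : ι → Finset γ) {k m : ℕ} (hk : k ∈ Set.Icc 1 2)
    (I : Finset ι) (hm : m ≤ I.card) (hS : ∀ i ∈ I, S i ⊆ w i) (hw : ∀ i ∈ I, (w i).card = k)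
    (hdisj : (I : Set ι).PairwiseDisjoint w) (E : Finset γ) (hwE : ∀ i ∈ I, w i ⊆ E)
    {Q : Finset γ → Prop} [DecidablePred Q] (hQ : ∀ R, Q R → ∀ i ∈ I, R ∩ w i ≠ S i) :
    ((E.powerset.filter Q).card : ℝ) ≤ (3 / 4) ^ m * 2 ^ E.card := by
  have hsub : E.powerset.filter Q ⊆ E.powerset.filter fun R => ∀ i ∈ I, R ∩ w i ≠ S i :=
    Finset.monotone_filter_right _ fun R _ hR => hQ R hR
  have h := card_filter_forall_inter_ne_mul_le w S I hS hw hdisj E hwE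
  have hk' : (2 : ℝ) ^ k - 1 ≤ 3 / 4 * 2 ^ k := by
    obtain ⟨hk1, hk2⟩ := hk
    interval_cases k <;> norm_num
  have hcast : ((E.powerset.filter fun R => ∀ i ∈ I, R ∩ w i ≠ S i).card : ℝ) *
      (2 ^ k) ^ I.card ≤ ((2 : ℝ) ^ k - 1) ^ I.card * 2 ^ E.card := by
    have h' := (Nat.cast_le (α := ℝ)).mpr h
    simp only [Nat.cast_mul, Nat.cast_pow, Nat.cast_sub Nat.one_le_two_pow, Nat.cast_ofNat,
      Nat.cast_one] at h'
    rwa [pow_mul] at h'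
  have hscaled : ((E.powerset.filter fun R => ∀ i ∈ I, R ∩ w i ≠ S i).card : ℝ) *
      (2 ^ k) ^ I.card ≤ (3 / 4) ^ I.card * 2 ^ E.card * (2 ^ k) ^ I.card := by
    calc _ ≤ ((2 : ℝ) ^ k - 1) ^ I.card * 2 ^ E.card := hcast
      _ ≤ (3 / 4 * 2 ^ k) ^ I.card * 2 ^ E.card := by
          gcongr
          linarith [one_le_pow₀ (M₀ := ℝ) (n := k) one_le_two]
      _ = _ := by ring
  calc ((E.powerset.filter Q).card : ℝ)
      ≤ (E.powerset.filter fun R => ∀ i ∈ I, R ∩ w i ≠ S i).card := by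
        exact_mod_cast Finset.card_le_card hsub
    _ ≤ (3 / 4 : ℝ) ^ I.card * 2 ^ E.card := le_of_mul_le_mul_right hscaled (by positivity)
    _ ≤ (3 / 4) ^ m * 2 ^ E.card :=
      mul_le_mul_of_nonneg_right (pow_le_pow_of_le_one (by norm_num) (by norm_num) hm)
        (by positivity)

theorem inter_pair_ne_singleton_of_imp {p q : γ} {R : Finset γ} (hpq : p ≠ q)
    (h : q ∈ R → p ∈ R) : R ∩ {p, q} ≠ {q} := by
  intro heq
  have hq : q ∈ R := (Finset.mem_inter.mp (heq ▸ Finset.mem_singleton_self q)).1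
  have hp : p ∈ R ∩ {p, q} := Finset.mem_inter.mpr ⟨h hq, Finset.mem_insert_self p {q}⟩
  exact hpq (Finset.mem_singleton.mp (heq ▸ hp))

end TraceCounting

section Levels

variable {n : ℕ} {A B C : Finset (Fin n)}

def admissibleEdges (A B C : Finset (Fin n)) : Finset (Fin n × Fin n) := A ×ˢ B ∪ B ×ˢ C

@[simp]
theorem mem_admissibleEdges {p : Fin n × Fin n} :
    p ∈ admissibleEdges A B C ↔ p.1 ∈ A ∧ p.2 ∈ B ∨ p.1 ∈ B ∧ p.2 ∈ C := by
  simp [admissibleEdges]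

theorem coe_admissibleEdges :
    (admissibleEdges A B C : Set (Fin n × Fin n)) =
      (A : Set (Fin n)) ×ˢ (B : Set (Fin n)) ∪ (B : Set (Fin n)) ×ˢ (C : Set (Fin n)) := by
  simp [admissibleEdges]

theorem card_admissibleEdges_of_disjoint (hAB : Disjoint A B) :
    (admissibleEdges A B C).card = A.card * B.card + B.card * C.card := by
  rw [admissibleEdges, Finset.card_union_of_disjoint, Finset.card_product, Finset.card_product]
  exact Finset.disjoint_product.mpr (.inl hAB)

/-- For `R ⊆ (A × B) ∪ (B × C)` this is the transitive closure of `R`. -/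
def twoStepClosure {α : Type*} (R : Finset (α × α)) : Set (α × α) :=
  ↑R ∪ {p | ∃ b, (p.1, b) ∈ R ∧ (b, p.2) ∈ R}

variable (hAB : Disjoint A B) (hAC : Disjoint A C) (hBC : Disjoint B C)
include hAB hAC hBC

theorem mem_levels_of_chain {x y z : Fin n} (hxy : (x, y) ∈ admissibleEdges A B C)
    (hyz : (y, z) ∈ admissibleEdges A B C) : x ∈ A ∧ y ∈ B ∧ z ∈ C := by
  simp only [mem_admissibleEdges] at hxy hyz
  rcases hxy with ⟨hx, hy⟩ | ⟨hx, hy⟩ <;> rcases hyz with ⟨hy', hz⟩ | ⟨hy', hz⟩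
  · exact absurd hy' (Finset.disjoint_right.mp hAB hy)
  · exact ⟨hx, hy, hz⟩
  · exact absurd hy' (Finset.disjoint_right.mp hAC hy)
  · exact absurd hy' (Finset.disjoint_right.mp hBC hy)

theorem isSPO_twoStepClosure {R : Finset (Fin n × Fin n)} (hR : R ⊆ admissibleEdges A B C) :
    IsSPO (twoStepClosure R) := by
  have chain := fun {x y z : Fin n} (hxy : (x, y) ∈ R) (hyz : (y, z) ∈ R) =>
    mem_levels_of_chain hAB hAC hBC (hR hxy) (hR hyz)
  refine ⟨fun x hx => ?_, fun x y z hxy hyz => ?_⟩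
  · rcases hx with hx | ⟨b, hxb, hbx⟩
    · rcases mem_admissibleEdges.mp (hR hx) with ⟨h, h'⟩ | ⟨h, h'⟩
      exacts [Finset.disjoint_left.mp hAB h h', Finset.disjoint_left.mp hBC h h']
    · exact Finset.disjoint_left.mp hAC (chain hxb hbx).1 (chain hxb hbx).2.2
  · rcases hxy with hxy | ⟨b, hxb, hby⟩ <;> rcases hyz with hyz | ⟨b', hyb', hb'z⟩
    · exact .inr ⟨y, hxy, hyz⟩
    · exact absurd (chain hxy hyb').2.1 (Finset.disjoint_left.mp hAB (chain hyb' hb'z).1)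
    · exact absurd (chain hby hyz).2.1 (Finset.disjoint_right.mp hBC (chain hxb hby).2.2)
    · exact absurd (chain hby hyb').2.1 (Finset.disjoint_right.mp hBC (chain hxb hby).2.2)

theorem twoStepClosure_inter_admissibleEdges {R : Finset (Fin n × Fin n)}
    (hR : R ⊆ admissibleEdges A B C) :
    twoStepClosure R ∩ ↑(admissibleEdges A B C) = ↑R := by
  refine Set.Subset.antisymm ?_ fun p hp => ⟨.inl hp, hR hp⟩
  rintro p ⟨hp | ⟨b, hpb, hbp⟩, hpE⟩
  · exact hp
  · obtain ⟨hx, -, hy⟩ := mem_levels_of_chain hAB hAC hBC (hR hpb) (hR hbp)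
    simp only [Finset.mem_coe, mem_admissibleEdges] at hpE
    rcases hpE with ⟨-, hy'⟩ | ⟨hx', -⟩
    · exact absurd hy (Finset.disjoint_left.mp hBC hy')
    · exact absurd hx' (Finset.disjoint_left.mp hAB hx)

end Levels

section Partitions

variable {n : ℕ} {A B C : Finset (Fin n)}

theorem mem_or_mem_or_mem_of_union_eq_univ (hABC : A ∪ B ∪ C = Finset.univ) (x : Fin n) :
    x ∈ A ∨ x ∈ B ∨ x ∈ C := by
  have hx := Finset.mem_univ x
  rw [← hABC] at hx
  simpa [or_assoc] using hx

theorem LPart.nonempty (hL : LPart n A B C) (hn : 4 ≤ n) :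
    A.Nonempty ∧ B.Nonempty ∧ C.Nonempty := by
  obtain ⟨-, -, -, -, hA, hC, hB⟩ := hL
  simp only [← Finset.card_pos, hA, hB, hC]
  omega

theorem LPart.quarter_le_card (hL : LPart n A B C) :
    n / 4 ≤ A.card ∧ n / 4 ≤ B.card ∧ n / 4 ≤ C.card := by
  obtain ⟨-, -, -, -, hA, hC, hB⟩ := hL
  omega

theorem LPart.mem_middle_iff (hL : LPart n A B C) {x : Fin n} : x ∈ B ↔ x ∉ A ∧ x ∉ C := by
  obtain ⟨hAB, -, hBC, hABC, -⟩ := hL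
  refine ⟨fun hx => ⟨Finset.disjoint_right.mp hAB hx, Finset.disjoint_left.mp hBC hx⟩,
    fun ⟨hA, hC⟩ => ?_⟩
  rcases mem_or_mem_or_mem_of_union_eq_univ hABC x with h | h | h
  exacts [absurd h hA, h, absurd h hC]

theorem LPart.card_admissibleEdges (hL : LPart n A B C) :
    (admissibleEdges A B C).card = 2 * (n / 4) * (n / 2) := by
  obtain ⟨hAB, -, -, -, hA, hC, hB⟩ := hL
  rw [card_admissibleEdges_of_disjoint hAB, hA, hB, hC]
  ring

theorem exists_LPart (m : ℕ) : ∃ A B C : Finset (Fin (4 * m)), LPart (4 * m) A B C := by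
  obtain ⟨A, -, hA⟩ := Finset.exists_subset_card_eq (s := (Finset.univ : Finset (Fin (4 * m))))
    (n := m) (by simp; omega)
  obtain ⟨C, hCA, hC⟩ := Finset.exists_subset_card_eq (s := Finset.univ \ A) (n := m)
    (by rw [Finset.card_sdiff_of_subset A.subset_univ]; simp [hA]; omega)
  have hAC : Disjoint A C := Finset.disjoint_of_subset_right hCA Finset.disjoint_sdiff
  refine ⟨A, (Finset.univ \ A) \ C, C, Finset.disjoint_of_subset_right Finset.sdiff_subset
    Finset.disjoint_sdiff, hAC, Finset.sdiff_disjoint, ?_, by omega, by omega, ?_⟩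
  · ext x; by_cases x ∈ A <;> by_cases x ∈ C <;> simp [*]
  · rw [Finset.card_sdiff_of_subset hCA, Finset.card_sdiff_of_subset A.subset_univ]
    simp [hA, hC]
    omega

end Partitions

section TOrders

variable {n : ℕ} {A B C : Finset (Fin n)} {P : Set (Fin n × Fin n)}

theorem TABC.not_mem_of_same_level (hT : TABC n A B C P) {x y : Fin n}
    (hxy : (x ∈ A ∧ y ∈ A) ∨ (x ∈ B ∧ y ∈ B) ∨ (x ∈ C ∧ y ∈ C)) : (x, y) ∉ P := by
  obtain ⟨⟨hirr, htrans⟩, hlevel, -⟩ := hT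
  intro h
  rcases hlevel x y hxy (by rintro rfl; exact hirr x h) with hd | hu
  · exact hd fun z hz => htrans z x y hz h
  · exact hu fun z hz => htrans x y z h hz

variable (hABC : A ∪ B ∪ C = Finset.univ) (hA : A.Nonempty) (hB : B.Nonempty) (hC : C.Nonempty)
include hABC hA hB hC

theorem TABC.mem_left_iff (hT : TABC n A B C P) {x : Fin n} : x ∈ A ↔ ∀ y, (y, x) ∉ P := by
  obtain ⟨a, ha⟩ := hA
  obtain ⟨b, hb⟩ := hB
  obtain ⟨c, hc⟩ := hC
  have hirr := hT.1.1
  have htrans := hT.1.2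
  have hii := hT.2.2
  refine ⟨fun hx y hyx => ?_, fun h => ?_⟩
  · rcases mem_or_mem_or_mem_of_union_eq_univ hABC y with hy | hy | hy
    · exact hT.not_mem_of_same_level (.inl ⟨hy, hx⟩) hyx
    · obtain ⟨a', ha', ha'y⟩ := (hii x hx y hy c hc).2.1
      exact hT.not_mem_of_same_level (.inl ⟨ha', hx⟩) (htrans _ _ _ ha'y hyx)
    · obtain ⟨b', ⟨hxb', -⟩, hb'y⟩ := (hii x hx b hb y hy).1
      exact hirr x (htrans _ _ _ hxb' (htrans _ _ _ hb'y hyx))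
  · rcases mem_or_mem_or_mem_of_union_eq_univ hABC x with hx | hx | hx
    · exact hx
    · obtain ⟨a', -, ha'x⟩ := (hii a ha x hx c hc).2.1
      exact absurd ha'x (h a')
    · obtain ⟨b', -, hb'x⟩ := (hii a ha b hb x hx).1
      exact absurd hb'x (h b')

theorem TABC.mem_right_iff (hT : TABC n A B C P) {x : Fin n} : x ∈ C ↔ ∀ y, (x, y) ∉ P := by
  obtain ⟨a, ha⟩ := hA
  obtain ⟨b, hb⟩ := hB
  obtain ⟨c, hc⟩ := hC
  have hirr := hT.1.1
  have htrans := hT.1.2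
  have hii := hT.2.2
  refine ⟨fun hx y hxy => ?_, fun h => ?_⟩
  · rcases mem_or_mem_or_mem_of_union_eq_univ hABC y with hy | hy | hy
    · obtain ⟨b', ⟨hyb', -⟩, hb'x⟩ := (hii y hy b hb x hx).1
      exact hirr x (htrans _ _ _ hxy (htrans _ _ _ hyb' hb'x))
    · obtain ⟨c', hyc', hc'⟩ := (hii a ha y hy x hx).2.2
      exact hT.not_mem_of_same_level (.inr (.inr ⟨hx, hc'⟩)) (htrans _ _ _ hxy hyc')
    · exact hT.not_mem_of_same_level (.inr (.inr ⟨hx, hy⟩)) hxy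
  · rcases mem_or_mem_or_mem_of_union_eq_univ hABC x with hx | hx | hx
    · obtain ⟨b', ⟨hxb', -⟩, -⟩ := (hii x hx b hb c hc).1
      exact absurd hxb' (h b')
    · obtain ⟨c', hxc', -⟩ := (hii a ha x hx c hc).2.2
      exact absurd hxc' (h c')
    · exact hx

theorem TABC.toUABC (hT : TABC n A B C P) : UABC n A B C P := by
  refine ⟨hT.1, fun ⟨x, y⟩ ⟨hxy, hcov⟩ => ?_⟩
  have hx : x ∉ C := fun hx => (hT.mem_right_iff hABC hA hB hC).mp hx y hxy
  have hy : y ∉ A := fun hy => (hT.mem_left_iff hABC hA hB hC).mp hy x hxy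
  simp only [Set.mem_union, Set.mem_prod, Finset.mem_coe]
  rcases mem_or_mem_or_mem_of_union_eq_univ hABC x with hx' | hx' | hx'
  · rcases mem_or_mem_or_mem_of_union_eq_univ hABC y with hy' | hy' | hy'
    · exact absurd hxy (hT.not_mem_of_same_level (.inl ⟨hx', hy'⟩))
    · exact .inl ⟨hx', hy'⟩
    · obtain ⟨b, hb⟩ := hB
      obtain ⟨b', ⟨hxb', -⟩, hb'y⟩ := (hT.2.2 x hx' b hb y hy').1
      exact absurd ⟨b', hxb', hb'y⟩ hcov
  · rcases mem_or_mem_or_mem_of_union_eq_univ hABC y with hy' | hy' | hy'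
    · exact absurd hy' hy
    · exact absurd hxy (hT.not_mem_of_same_level (.inr (.inl ⟨hx', hy'⟩)))
    · exact .inr ⟨hx', hy'⟩
  · exact absurd hx' hx

end TOrders

theorem TABC.partition_eq {n : ℕ} {A B C A' B' C' : Finset (Fin n)} {P : Set (Fin n × Fin n)}
    (hn : 4 ≤ n) (hL : LPart n A B C) (hL' : LPart n A' B' C') (hT : TABC n A B C P)
    (hT' : TABC n A' B' C' P) : A = A' ∧ B = B' ∧ C = C' := by
  obtain ⟨hA, hB, hC⟩ := hL.nonempty hn
  obtain ⟨hA', hB', hC'⟩ := hL'.nonempty hn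
  have hAA' : A = A' := by
    ext x
    rw [hT.mem_left_iff hL.2.2.2.1 hA hB hC, hT'.mem_left_iff hL'.2.2.2.1 hA' hB' hC']
  have hCC' : C = C' := by
    ext x
    rw [hT.mem_right_iff hL.2.2.2.1 hA hB hC, hT'.mem_right_iff hL'.2.2.2.1 hA' hB' hC']
  refine ⟨hAA', ?_, hCC'⟩
  ext x
  rw [hL.mem_middle_iff, hL'.mem_middle_iff, hAA', hCC']

section Obstructions

variable {n : ℕ} {A B C : Finset (Fin n)}

/-- The local patterns of `R` at `(x, y)` that keep `twoStepClosure R` out of `T_{ABC}(n)`. -/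
def Obstructed (A B C : Finset (Fin n)) (R : Finset (Fin n × Fin n)) (x y : Fin n) : Prop :=
  ((x ∈ A ∧ y ∈ A ∧ x ≠ y) ∧ ∀ b ∈ B, (y, b) ∈ R → (x, b) ∈ R) ∨
  ((x ∈ B ∧ y ∈ B ∧ x ≠ y) ∧ ∀ a ∈ A, (a, x) ∈ R → (a, y) ∈ R) ∨
  ((x ∈ C ∧ y ∈ C ∧ x ≠ y) ∧ ∀ b ∈ B, (b, x) ∈ R → (b, y) ∈ R) ∨
  ((x ∈ A ∧ y ∈ C) ∧ ∀ b ∈ B, ¬((x, b) ∈ R ∧ (b, y) ∈ R)) ∨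
  (x ∈ B ∧ ∀ a ∈ A, (a, x) ∉ R) ∨
  (x ∈ B ∧ ∀ c ∈ C, (x, c) ∉ R)

theorem exists_obstructed_of_not_TABC (hAB : Disjoint A B) (hAC : Disjoint A C)
    (hBC : Disjoint B C) {R : Finset (Fin n × Fin n)} (hR : R ⊆ admissibleEdges A B C)
    (h : ¬ TABC n A B C (twoStepClosure R)) : ∃ x y, Obstructed A B C R x y := by
  have hmem : ∀ p ∈ admissibleEdges A B C, p ∈ twoStepClosure R → p ∈ R := fun p hp hpR => by
    simpa using (twoStepClosure_inter_admissibleEdges hAB hAC hBC hR).le ⟨hpR, hp⟩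
  rw [TABC, and_iff_right (isSPO_twoStepClosure hAB hAC hBC hR), not_and_or] at h
  simp only [not_forall, not_or, not_not, not_and_or] at h
  rcases h with ⟨x, y, hlevel, hxy, hd, hu⟩ | ⟨a, ha, b, hb, c, hc, h | h | h⟩
  · rcases hlevel with ⟨hx, hy⟩ | ⟨hx, hy⟩ | ⟨hx, hy⟩
    · exact ⟨x, y, .inl ⟨⟨hx, hy, hxy⟩, fun b hb hyb =>
        hmem (x, b) (by simp [hx, hb]) (hu (Or.inl hyb))⟩⟩
    · exact ⟨x, y, .inr (.inl ⟨⟨hx, hy, hxy⟩, fun a ha hax =>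
        hmem (a, y) (by simp [ha, hy]) (hd (Or.inl hax))⟩)⟩
    · exact ⟨x, y, .inr (.inr (.inl ⟨⟨hx, hy, hxy⟩, fun b hb hbx =>
        hmem (b, y) (by simp [hb, hy]) (hd (Or.inl hbx))⟩))⟩
  · exact ⟨a, c, .inr (.inr (.inr (.inl ⟨⟨ha, hc⟩, fun b' hb' ⟨hab', hb'c⟩ =>
      h ⟨b', ⟨Or.inl hab', hb'⟩, Or.inl hb'c⟩⟩)))⟩
  · exact ⟨b, b, .inr (.inr (.inr (.inr (.inl ⟨hb, fun a' ha' ha'b =>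
      h ⟨a', ha', Or.inl ha'b⟩⟩))))⟩
  · exact ⟨b, b, .inr (.inr (.inr (.inr (.inr ⟨hb, fun c' hc' hbc' =>
      h ⟨c', Or.inl hbc', hc'⟩⟩))))⟩

end Obstructions

section ObstructionCount

variable {n : ℕ} {A B C : Finset (Fin n)} (hL : LPart n A B C) (x y : Fin n)
include hL

theorem card_filter_left_twins_le :
    ((admissibleEdges A B C).powerset.filter fun R => (x ∈ A ∧ y ∈ A ∧ x ≠ y) ∧
      ∀ b ∈ B, (y, b) ∈ R → (x, b) ∈ R).card ≤
      (3 / 4 : ℝ) ^ (n / 4) * 2 ^ (admissibleEdges A B C).card :=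
  card_filter_and_le_of_imp (by positivity) fun ⟨hx, hy, hxy⟩ =>
    card_filter_le_of_forall_inter_ne (fun b => {(x, b), (y, b)}) (fun b => {(y, b)})
      ⟨one_le_two, le_rfl⟩ B hL.quarter_le_card.2.1 (by simp) (by simp [hxy])
      (fun b _ b' _ hne => by simp [Finset.disjoint_left, hne]) _
      (fun b hb => by simp [Finset.insert_subset_iff, hx, hy, hb])
      fun R hR b hb => inter_pair_ne_singleton_of_imp (by simp [hxy]) (hR b hb)

theorem card_filter_middle_twins_le :
    ((admissibleEdges A B C).powerset.filter fun R => (x ∈ B ∧ y ∈ B ∧ x ≠ y) ∧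
      ∀ a ∈ A, (a, x) ∈ R → (a, y) ∈ R).card ≤
      (3 / 4 : ℝ) ^ (n / 4) * 2 ^ (admissibleEdges A B C).card :=
  card_filter_and_le_of_imp (by positivity) fun ⟨hx, hy, hxy⟩ =>
    card_filter_le_of_forall_inter_ne (fun a => {(a, y), (a, x)}) (fun a => {(a, x)})
      ⟨one_le_two, le_rfl⟩ A hL.quarter_le_card.1 (by simp) (by simp [hxy.symm])
      (fun a _ a' _ hne => by simp [Finset.disjoint_left, hne]) _
      (fun a ha => by simp [Finset.insert_subset_iff, hx, hy, ha])
      fun R hR a ha => inter_pair_ne_singleton_of_imp (by simp [hxy.symm]) (hR a ha)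

theorem card_filter_right_twins_le :
    ((admissibleEdges A B C).powerset.filter fun R => (x ∈ C ∧ y ∈ C ∧ x ≠ y) ∧
      ∀ b ∈ B, (b, x) ∈ R → (b, y) ∈ R).card ≤
      (3 / 4 : ℝ) ^ (n / 4) * 2 ^ (admissibleEdges A B C).card :=
  card_filter_and_le_of_imp (by positivity) fun ⟨hx, hy, hxy⟩ =>
    card_filter_le_of_forall_inter_ne (fun b => {(b, y), (b, x)}) (fun b => {(b, x)})
      ⟨one_le_two, le_rfl⟩ B hL.quarter_le_card.2.1 (by simp) (by simp [hxy.symm])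
      (fun b _ b' _ hne => by simp [Finset.disjoint_left, hne]) _
      (fun b hb => by simp [Finset.insert_subset_iff, hx, hy, hb])
      fun R hR b hb => inter_pair_ne_singleton_of_imp (by simp [hxy.symm]) (hR b hb)

theorem card_filter_no_common_middle_le :
    ((admissibleEdges A B C).powerset.filter fun R => (x ∈ A ∧ y ∈ C) ∧
      ∀ b ∈ B, ¬((x, b) ∈ R ∧ (b, y) ∈ R)).card ≤
      (3 / 4 : ℝ) ^ (n / 4) * 2 ^ (admissibleEdges A B C).card :=
  card_filter_and_le_of_imp (by positivity) fun ⟨hx, hy⟩ => by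
    have hxB : ∀ b ∈ B, x ≠ b := fun b hb => Finset.disjoint_left.mp hL.1 hx ∘ (· ▸ hb)
    have hyB : ∀ b ∈ B, b ≠ y := fun b hb => Finset.disjoint_left.mp hL.2.2.1 hb ∘ (· ▸ hy)
    refine card_filter_le_of_forall_inter_ne (fun b => {(x, b), (b, y)})
      (fun b => {(x, b), (b, y)}) ⟨one_le_two, le_rfl⟩ B hL.quarter_le_card.2.1
      (by simp) (fun b hb => by simp [hxB b hb])
      (fun b hb b' hb' hne => by
        simp [Finset.disjoint_left, hne, hxB b' hb', (hxB b hb).symm, hyB b hb]) _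
      (fun b hb => by simp [Finset.insert_subset_iff, hx, hy, hb]) fun R hR b hb => ?_
    simpa [Finset.inter_eq_right, Finset.insert_subset_iff] using hR b hb

theorem card_filter_no_lower_le :
    ((admissibleEdges A B C).powerset.filter fun R => x ∈ B ∧ ∀ a ∈ A, (a, x) ∉ R).card ≤
      (3 / 4 : ℝ) ^ (n / 4) * 2 ^ (admissibleEdges A B C).card :=
  card_filter_and_le_of_imp (by positivity) fun hx =>
    card_filter_le_of_forall_inter_ne (fun a => {(a, x)}) (fun a => {(a, x)})
      ⟨le_rfl, one_le_two⟩ A hL.quarter_le_card.1 (by simp) (by simp)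
      (fun a _ a' _ hne => by simp [hne]) _ (fun a ha => by simp [hx, ha])
      fun R hR a ha => by simpa [Finset.inter_eq_right] using hR a ha

theorem card_filter_no_upper_le :
    ((admissibleEdges A B C).powerset.filter fun R => x ∈ B ∧ ∀ c ∈ C, (x, c) ∉ R).card ≤
      (3 / 4 : ℝ) ^ (n / 4) * 2 ^ (admissibleEdges A B C).card :=
  card_filter_and_le_of_imp (by positivity) fun hx =>
    card_filter_le_of_forall_inter_ne (fun c => {(x, c)}) (fun c => {(x, c)})
      ⟨le_rfl, one_le_two⟩ C hL.quarter_le_card.2.2 (by simp) (by simp)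
      (fun c _ c' _ hne => by simp [hne]) _ (fun c hc => by simp [hx, hc])
      fun R hR c hc => by simpa [Finset.inter_eq_right] using hR c hc

open Classical in
theorem card_filter_obstructed_le :
    (((admissibleEdges A B C).powerset.filter fun R => Obstructed A B C R x y).card : ℝ) ≤
      6 * ((3 / 4) ^ (n / 4) * 2 ^ (admissibleEdges A B C).card) := by
  set E := admissibleEdges A B C
  set f1 := E.powerset.filter fun R => (x ∈ A ∧ y ∈ A ∧ x ≠ y) ∧
    ∀ b ∈ B, (y, b) ∈ R → (x, b) ∈ R
  set f2 := E.powerset.filter fun R => (x ∈ B ∧ y ∈ B ∧ x ≠ y) ∧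
    ∀ a ∈ A, (a, x) ∈ R → (a, y) ∈ R
  set f3 := E.powerset.filter fun R => (x ∈ C ∧ y ∈ C ∧ x ≠ y) ∧
    ∀ b ∈ B, (b, x) ∈ R → (b, y) ∈ R
  set f4 := E.powerset.filter fun R => (x ∈ A ∧ y ∈ C) ∧ ∀ b ∈ B, ¬((x, b) ∈ R ∧ (b, y) ∈ R)
  set f5 := E.powerset.filter fun R => x ∈ B ∧ ∀ a ∈ A, (a, x) ∉ R
  set f6 := E.powerset.filter fun R => x ∈ B ∧ ∀ c ∈ C, (x, c) ∉ R
  have hsub : E.powerset.filter (fun R => Obstructed A B C R x y) ⊆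
      f1 ∪ f2 ∪ f3 ∪ f4 ∪ f5 ∪ f6 := by
    intro R hR
    obtain ⟨hRE, h⟩ := Finset.mem_filter.mp hR
    simp only [f1, f2, f3, f4, f5, f6, Finset.mem_union, Finset.mem_filter, hRE, true_and,
      or_assoc]
    exact h
  have hU : ∀ s t : Finset (Finset (Fin n × Fin n)), ((s ∪ t).card : ℝ) ≤ s.card + t.card :=
    fun s t => mod_cast Finset.card_union_le s t
  have hcard : ((E.powerset.filter fun R => Obstructed A B C R x y).card : ℝ) ≤
      (f1 ∪ f2 ∪ f3 ∪ f4 ∪ f5 ∪ f6).card := mod_cast Finset.card_le_card hsub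
  linarith [hU (f1 ∪ f2 ∪ f3 ∪ f4 ∪ f5) f6, hU (f1 ∪ f2 ∪ f3 ∪ f4) f5, hU (f1 ∪ f2 ∪ f3) f4,
    hU (f1 ∪ f2) f3, hU f1 f2, card_filter_left_twins_le hL x y,
    card_filter_middle_twins_le hL x y, card_filter_right_twins_le hL x y,
    card_filter_no_common_middle_le hL x y, card_filter_no_lower_le hL x,
    card_filter_no_upper_le hL x]

end ObstructionCount

section PartitionCounts

variable {n : ℕ} {A B C : Finset (Fin n)}

theorem ncard_UABC_le : {P | UABC n A B C P}.ncard ≤ 2 ^ (admissibleEdges A B C).card := by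
  calc {P | UABC n A B C P}.ncard
      ≤ (𝒫 (admissibleEdges A B C : Set (Fin n × Fin n))).ncard :=
        Set.ncard_le_ncard_of_injOn covRel (fun P hP => by simpa [coe_admissibleEdges] using hP.2)
          fun P hP Q hQ h => hP.1.eq_of_covRel_eq hQ.1 h
    _ = 2 ^ (admissibleEdges A B C).card := by simp

open Classical in
theorem two_pow_le_ncard_TABC_add (hAB : Disjoint A B) (hAC : Disjoint A C)
    (hBC : Disjoint B C) :
    2 ^ (admissibleEdges A B C).card ≤ {P | TABC n A B C P}.ncard +
      ((admissibleEdges A B C).powerset.filter fun R =>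
        ¬ TABC n A B C (twoStepClosure R)).card := by
  have hgood : ((admissibleEdges A B C).powerset.filter fun R =>
      TABC n A B C (twoStepClosure R)).card ≤ {P | TABC n A B C P}.ncard := by
    rw [← Set.ncard_coe_finset]
    refine Set.ncard_le_ncard_of_injOn twoStepClosure (fun R hR => (Finset.mem_filter.mp hR).2)
      fun R hR R' hR' h => ?_
    have hR := Finset.mem_powerset.mp (Finset.mem_filter.mp hR).1
    have hR' := Finset.mem_powerset.mp (Finset.mem_filter.mp hR').1
    have := twoStepClosure_inter_admissibleEdges hAB hAC hBC hR
    rwa [h, twoStepClosure_inter_admissibleEdges hAB hAC hBC hR', Finset.coe_inj, eq_comm] at this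
  rw [← Finset.card_powerset, ← Finset.card_filter_add_card_filter_not
    (fun R => TABC n A B C (twoStepClosure R))]
  exact Nat.add_le_add_right hgood _

open Classical in
theorem card_filter_not_TABC_le (hL : LPart n A B C) :
    (((admissibleEdges A B C).powerset.filter fun R =>
      ¬ TABC n A B C (twoStepClosure R)).card : ℝ) ≤
      6 * n ^ 2 * ((3 / 4) ^ (n / 4) * 2 ^ (admissibleEdges A B C).card) := by
  have hsub : ((admissibleEdges A B C).powerset.filter fun R =>
      ¬ TABC n A B C (twoStepClosure R)) ⊆ (Finset.univ ×ˢ Finset.univ).biUnion fun p =>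
        (admissibleEdges A B C).powerset.filter fun R => Obstructed A B C R p.1 p.2 := by
    intro R hR
    obtain ⟨hRE, hR⟩ := Finset.mem_filter.mp hR
    obtain ⟨x, y, h⟩ := exists_obstructed_of_not_TABC hL.1 hL.2.1 hL.2.2.1
      (Finset.mem_powerset.mp hRE) hR
    exact Finset.mem_biUnion.mpr ⟨(x, y), by simp, Finset.mem_filter.mpr ⟨hRE, h⟩⟩
  calc _ ≤ (((Finset.univ ×ˢ Finset.univ).biUnion fun p =>
        (admissibleEdges A B C).powerset.filter fun R => Obstructed A B C R p.1 p.2).card : ℝ) :=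
        mod_cast Finset.card_le_card hsub
    _ ≤ ∑ p ∈ (Finset.univ ×ˢ Finset.univ : Finset (Fin n × Fin n)),
        (((admissibleEdges A B C).powerset.filter fun R => Obstructed A B C R p.1 p.2).card : ℝ) :=
        mod_cast Finset.card_biUnion_le
    _ ≤ ∑ _p ∈ (Finset.univ ×ˢ Finset.univ : Finset (Fin n × Fin n)),
        6 * ((3 / 4) ^ (n / 4) * 2 ^ (admissibleEdges A B C).card) :=
        Finset.sum_le_sum fun p _ => card_filter_obstructed_le hL p.1 p.2
    _ = _ := by simp; ring

theorem le_ncard_TABC (hL : LPart n A B C) :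
    (2 : ℝ) ^ (admissibleEdges A B C).card * (1 - 6 * n ^ 2 * (3 / 4) ^ (n / 4)) ≤
      {P | TABC n A B C P}.ncard := by
  have h := (Nat.cast_le (α := ℝ)).mpr (two_pow_le_ncard_TABC_add hL.1 hL.2.1 hL.2.2.1)
  push_cast at h
  linarith [card_filter_not_TABC_le hL]

end PartitionCounts

section Global

open Classical in
/-- The finite index set `L(n)`. -/
noncomputable def partitions (n : ℕ) : Finset (Finset (Fin n) × Finset (Fin n) × Finset (Fin n)) :=
  Finset.univ.filter fun t => LPart n t.1 t.2.1 t.2.2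

theorem mem_partitions {n : ℕ} {t : Finset (Fin n) × Finset (Fin n) × Finset (Fin n)} :
    t ∈ partitions n ↔ LPart n t.1 t.2.1 t.2.2 := by
  simp [partitions]

theorem Tset_eq_biUnion (n : ℕ) :
    Tset n = ⋃ t ∈ partitions n, {P | TABC n t.1 t.2.1 t.2.2 P} := by
  ext P
  simp [Tset, mem_partitions]

theorem Uset_eq_biUnion (n : ℕ) :
    Uset n = ⋃ t ∈ partitions n, {P | UABC n t.1 t.2.1 t.2.2 P} := by
  ext P
  simp [Uset, mem_partitions]

theorem Tset_subset_Uset {n : ℕ} (hn : 4 ∣ n) : Tset n ⊆ Uset n := by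
  rintro P ⟨A, B, C, hL, hT⟩
  refine ⟨A, B, C, hL, hT.1, fun p hp => ?_⟩
  obtain ⟨hA, hB, hC⟩ := hL.nonempty (Nat.le_of_dvd p.1.pos hn)
  exact (hT.toUABC hL.2.2.2.1 hA hB hC).2 hp

theorem empty_mem_Uset {n : ℕ} (hn : 4 ∣ n) : ∅ ∈ Uset n := by
  obtain ⟨m, rfl⟩ := hn
  obtain ⟨A, B, C, hL⟩ := exists_LPart m
  exact ⟨A, B, C, hL, ⟨fun _ => id, fun _ _ _ h => h.elim⟩, fun _ h => h.1.elim⟩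

theorem ncard_Uset_le (n : ℕ) :
    ((Uset n).ncard : ℝ) ≤ (partitions n).card * 2 ^ (2 * (n / 4) * (n / 2)) := by
  rw [Uset_eq_biUnion]
  calc (((⋃ t ∈ partitions n, {P | UABC n t.1 t.2.1 t.2.2 P}).ncard : ℕ) : ℝ)
      ≤ ∑ t ∈ partitions n, ({P | UABC n t.1 t.2.1 t.2.2 P}.ncard : ℝ) :=
        mod_cast Finset.set_ncard_biUnion_le _ _
    _ ≤ ∑ _t ∈ partitions n, (2 : ℝ) ^ (2 * (n / 4) * (n / 2)) :=
        Finset.sum_le_sum fun t ht => by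
          rw [← (mem_partitions.mp ht).card_admissibleEdges]
          exact_mod_cast ncard_UABC_le
    _ = _ := by simp

theorem le_ncard_Tset {n : ℕ} (hn : 4 ≤ n) :
    (partitions n).card * 2 ^ (2 * (n / 4) * (n / 2)) * (1 - 6 * n ^ 2 * (3 / 4 : ℝ) ^ (n / 4)) ≤
      (Tset n).ncard := by
  have hdisj : Set.PairwiseDisjoint ↑(partitions n)
      fun t : Finset (Fin n) × Finset (Fin n) × Finset (Fin n) => {P | TABC n t.1 t.2.1 t.2.2 P} := by
    rintro ⟨A, B, C⟩ ht ⟨A', B', C'⟩ ht' hne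
    refine Set.disjoint_left.mpr fun P hT hT' => hne ?_
    obtain ⟨rfl, rfl, rfl⟩ :=
      TABC.partition_eq hn (mem_partitions.mp ht) (mem_partitions.mp ht') hT hT'
    rfl
  rw [Tset_eq_biUnion, ← Finset.set_biUnion_coe, Set.Finite.ncard_biUnion (Finset.finite_toSet _)
    (fun _ _ => Set.toFinite _) hdisj, finsum_mem_coe_finset]
  push_cast
  calc _ = ∑ _t ∈ partitions n,
        (2 : ℝ) ^ (2 * (n / 4) * (n / 2)) * (1 - 6 * n ^ 2 * (3 / 4 : ℝ) ^ (n / 4)) := by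
        simp; ring
    _ ≤ _ := Finset.sum_le_sum fun t ht => by
          rw [← (mem_partitions.mp ht).card_admissibleEdges]
          exact le_ncard_TABC (mem_partitions.mp ht)

end Global

section Ratio

variable {n : ℕ}

theorem one_sub_ncard_Tset_div_ncard_Uset_nonneg (hn : 4 ∣ n) :
    0 ≤ 1 - ((Tset n).ncard : ℝ) / (Uset n).ncard :=
  sub_nonneg.mpr <| div_le_one_of_le₀ (mod_cast Set.ncard_le_ncard (Tset_subset_Uset hn))
    (Nat.cast_nonneg _)

theorem one_sub_ncard_Tset_div_ncard_Uset_le (hn : 4 ∣ n) (hn' : 4 ≤ n) :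
    1 - ((Tset n).ncard : ℝ) / (Uset n).ncard ≤ 6 * n ^ 2 * (3 / 4) ^ (n / 4) := by
  set D : ℝ := (partitions n).card * 2 ^ (2 * (n / 4) * (n / 2))
  have hU : (0 : ℝ) < (Uset n).ncard :=
    mod_cast (Set.ncard_pos (Set.toFinite _)).mpr ⟨∅, empty_mem_Uset hn⟩
  have hUD : ((Uset n).ncard : ℝ) ≤ D := ncard_Uset_le n
  have hTD : 1 - 6 * n ^ 2 * (3 / 4 : ℝ) ^ (n / 4) ≤ (Tset n).ncard / D := by
    rw [le_div_iff₀ (hU.trans_le hUD), mul_comm]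
    exact le_ncard_Tset hn'
  have hTU : ((Tset n).ncard : ℝ) / D ≤ (Tset n).ncard / (Uset n).ncard :=
    div_le_div_of_nonneg_left (Nat.cast_nonneg _) hU hUD
  linarith

end Ratio

/-- `T(n) ⊆ U(n)` for `4 ∣ n`, and
`α_n = 1 − |T(n)|/|U(n)|` is `o(1/n)`: the sequence
`4m · (1 − |T(4m)|/|U(4m)|)` tends to `0` as `m → ∞`. -/
theorem stmt13 :
    (∀ n : ℕ, 4 ∣ n → Tset n ⊆ Uset n) ∧
    Filter.Tendsto
      (fun m : ℕ => (4 * m : ℝ) *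
        (1 - ((Tset (4 * m)).ncard : ℝ) / ((Uset (4 * m)).ncard : ℝ)))
      Filter.atTop (nhds 0) := by
  refine ⟨fun n hn => Tset_subset_Uset hn, ?_⟩
  have hlim : Filter.Tendsto (fun m : ℕ => 384 * ((m : ℝ) ^ 3 * (3 / 4) ^ m)) Filter.atTop
      (nhds 0) := by
    simpa using (tendsto_pow_const_mul_const_pow_of_lt_one 3 (by norm_num : (0 : ℝ) ≤ 3 / 4)
      (by norm_num)).const_mul 384
  refine squeeze_zero' (Filter.Eventually.of_forall fun m => ?_)
    ((Filter.eventually_ge_atTop 1).mono fun m hm => ?_) hlim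
  · exact mul_nonneg (by positivity) (one_sub_ncard_Tset_div_ncard_Uset_nonneg ⟨m, rfl⟩)
  · calc (4 * m : ℝ) * (1 - ((Tset (4 * m)).ncard : ℝ) / (Uset (4 * m)).ncard)
        ≤ 4 * m * (6 * ((4 * m : ℕ) : ℝ) ^ 2 * (3 / 4) ^ (4 * m / 4)) :=
          mul_le_mul_of_nonneg_left
            (one_sub_ncard_Tset_div_ncard_Uset_le ⟨m, rfl⟩ (by omega)) (by positivity)
      _ = 384 * ((m : ℝ) ^ 3 * (3 / 4) ^ m) := by
          rw [Nat.mul_div_cancel_left m four_pos]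
          push_cast
          ring
end
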